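/- arXiv:1812.06240 — 7 statements merged into one kernel-verified Lean document; each statement's English description precedes it below -/
import Mathlib

section
/- In a matching-covered graph G with at least two edges, every singleton edge set {e} is feasible. -/
open SimpleGraph

variable {V : Type*}

/-- The edge cut `∇_G(U)`: edges of `G` with exactly one endpoint in `U`. -/
def edgeCut (G : SimpleGraph V) (U : Set V) : Set (Sym2 V) :=
  {e | e ∈ G.edgeSet ∧ ∃ x y, e = s(x, y) ∧ x ∈ U ∧ y ∉ U}

/-- Switching-equivalence of edge sets in `G`: `X = Y ⊕ ∇_G(V₀)` for some `V₀`. -/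
def SwEquiv (G : SimpleGraph V) (X Y : Set (Sym2 V)) : Prop :=
  ∃ U : Set V, X = symmDiff Y (edgeCut G U)

/-- A feasible edge set: two perfect matchings meeting `X` with different parities. -/
def Feasible (G : SimpleGraph V) (X : Set (Sym2 V)) : Prop :=
  ∃ M₁ M₂ : G.Subgraph, M₁.IsPerfectMatching ∧ M₂.IsPerfectMatching ∧
    (M₁.edgeSet ∩ X).ncard % 2 ≠ (M₂.edgeSet ∩ X).ncard % 2

/-- A matching-covered graph: connected and every edge lies in a perfect matching. -/
def MatchingCovered (G : SimpleGraph V) : Prop :=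
  G.Connected ∧ ∀ e ∈ G.edgeSet, ∃ M : G.Subgraph, M.IsPerfectMatching ∧ e ∈ M.edgeSet

/-!
Let `e` be an edge. A perfect matching through `e` meets `{e}` once, so it suffices to find one
avoiding `e`. Another edge has an endpoint `c` off `e`, and a walk from `e` to `c` leaves `e`
along some edge `xy` with `x ∈ e`, `y ∉ e`. A perfect matching through `xy` matches `x` outside
`e`, hence cannot contain `e`.
-/

theorem Sym2.exists_mem_notMem_of_ne {e f : Sym2 V} (hf : ¬f.IsDiag) (hfe : f ≠ e) :
    ∃ c ∈ f, c ∉ e := by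
  by_contra! hsub
  induction f using Sym2.ind with
  | _ x y =>
    have hxy : x ≠ y := by simpa using hf
    exact hfe (Sym2.eq_of_ne_mem hxy (Sym2.mem_mk_left x y) (Sym2.mem_mk_right x y)
      (hsub x (Sym2.mem_mk_left x y)) (hsub y (Sym2.mem_mk_right x y)))

theorem SimpleGraph.Connected.exists_adj_mem_notMem {G : SimpleGraph V} (hG : G.Connected)
    {S : Set V} {u v : V} (hu : u ∈ S) (hv : v ∉ S) : ∃ x ∈ S, ∃ y ∉ S, G.Adj x y := by
  obtain ⟨d, -, hd, hd'⟩ := (hG u v).some.exists_boundary_dart S hu hv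
  exact ⟨d.fst, hd, d.snd, hd', d.adj⟩

theorem SimpleGraph.Subgraph.IsMatching.notMem_edgeSet_of_adj {G : SimpleGraph V}
    {M : G.Subgraph} (hM : M.IsMatching) {x y : V} {e : Sym2 V} (hxy : M.Adj x y) (hx : x ∈ e)
    (hy : y ∉ e) : e ∉ M.edgeSet := by
  intro he
  have hother : M.Adj x (Sym2.Mem.other hx) := by
    rwa [← Subgraph.mem_edgeSet, Sym2.other_spec hx]
  exact hy (hM.eq_of_adj_left hxy hother ▸ Sym2.other_mem hx)

theorem feasible_singleton_of_mem_of_notMem {G : SimpleGraph V} {e : Sym2 V}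
    {M₁ M₂ : G.Subgraph} (hM₁ : M₁.IsPerfectMatching) (hM₂ : M₂.IsPerfectMatching)
    (he₁ : e ∈ M₁.edgeSet) (he₂ : e ∉ M₂.edgeSet) : Feasible G {e} := by
  refine ⟨M₁, M₂, hM₁, hM₂, ?_⟩
  rw [Set.inter_singleton_of_mem he₁, Set.inter_singleton_of_notMem he₂]
  simp

theorem stmt8_general {G : SimpleGraph V} (hG : MatchingCovered G)
    (hE : 2 ≤ G.edgeSet.ncard) {e : Sym2 V} (he : e ∈ G.edgeSet) :
    Feasible G {e} := by
  obtain ⟨hconn, hcover⟩ := hG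
  obtain ⟨f, hf, hfe⟩ := Set.exists_ne_of_one_lt_ncard (by omega : 1 < G.edgeSet.ncard) e
  obtain ⟨c, -, hc⟩ := Sym2.exists_mem_notMem_of_ne (G.not_isDiag_of_mem_edgeSet hf) hfe
  obtain ⟨x, hx, y, hy, hxy⟩ :=
    hconn.exists_adj_mem_notMem (S := {v | v ∈ e}) e.out_fst_mem hc
  obtain ⟨M₁, hM₁, he₁⟩ := hcover e he
  obtain ⟨M₂, hM₂, hxy₂⟩ := hcover s(x, y) hxy
  exact feasible_singleton_of_mem_of_notMem hM₁ hM₂ he₁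
    (hM₂.1.notMem_edgeSet_of_adj hxy₂ hx hy)

/-- in a matching-covered graph with at least two edges,
every singleton edge set is feasible. -/
theorem stmt8 [Fintype V] {G : SimpleGraph V} (hG : MatchingCovered G)
    (hE : 2 ≤ G.edgeSet.ncard) {e : Sym2 V} (he : e ∈ G.edgeSet) :
    Feasible G {e} :=
  stmt8_general hG hE he
end

section
/- In a matching-covered graph G with edge set E and |E| ≥ 2, for every edge e the set E \ {e} is feasible. -/
open SimpleGraph

variable {V : Type*}

lemma pm_edge_card [Fintype V] {G : SimpleGraph V} {M : G.Subgraph}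
    (h : M.IsPerfectMatching) : 2 * M.edgeSet.ncard = Fintype.card V := by
  classical
  have hfin : Fintype M.verts := Set.Finite.fintype (Set.toFinite _)
  have key : 2 * M.coe.edgeFinset.card = Fintype.card M.verts := by
    rw [← M.coe.sum_degrees_eq_twice_card_edges]
    simp only [Subgraph.coe_degree]
    rw [Finset.sum_congr rfl fun v _ => (Subgraph.degree_eq_one_iff_existsUnique_adj).mpr (h.1 v.2)]
    simp
  have h1 : M.coe.edgeFinset.card = M.coe.edgeSet.ncard := by
    rw [← Set.ncard_coe_finset, coe_edgeFinset]
  have h2 : M.edgeSet.ncard = M.coe.edgeSet.ncard := by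
    rw [← Subgraph.image_coe_edgeSet_coe]
    exact Set.ncard_image_of_injective _ (Sym2.map.injective Subtype.val_injective)
  have h3 : Fintype.card M.verts = Fintype.card V := by
    rw [← Set.toFinset_card, h.2.card_verts]
  omega

lemma aux_feasible [Fintype V] {G : SimpleGraph V}
    (hcov : ∀ e ∈ G.edgeSet, ∃ M : G.Subgraph, M.IsPerfectMatching ∧ e ∈ M.edgeSet)
    {x y z : V} (hxy : G.Adj x y) (hxz : G.Adj x z) (hzy : z ≠ y) :
    Feasible G (G.edgeSet \ {s(x, y)}) := by
  classical
  obtain ⟨M₁, hM₁, he₁⟩ := hcov s(x, y) hxy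
  obtain ⟨M₂, hM₂, he₂⟩ := hcov s(x, z) hxz
  have heM₂ : s(x, y) ∉ M₂.edgeSet := by
    intro hmem
    obtain ⟨w, -, huniq⟩ := hM₂.1 (hM₂.2 x)
    exact hzy ((huniq z (Subgraph.mem_edgeSet.mp he₂)).trans
      (huniq y (Subgraph.mem_edgeSet.mp hmem)).symm)
  refine ⟨M₁, M₂, hM₁, hM₂, ?_⟩
  have hA : M₁.edgeSet ∩ (G.edgeSet \ {s(x, y)}) = M₁.edgeSet \ {s(x, y)} := by
    ext f
    have := M₁.edgeSet_subset
    simp only [Set.mem_inter_iff, Set.mem_diff, Set.mem_singleton_iff]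
    exact ⟨fun h => ⟨h.1, h.2.2⟩, fun h => ⟨h.1, this h.1, h.2⟩⟩
  have hB : M₂.edgeSet ∩ (G.edgeSet \ {s(x, y)}) = M₂.edgeSet := by
    apply Set.inter_eq_left.mpr
    intro f hf
    exact ⟨M₂.edgeSet_subset hf, fun hc => heM₂ (hc ▸ hf)⟩
  rw [hA, hB, Set.ncard_diff_singleton_of_mem he₁]
  have c1 := pm_edge_card hM₁
  have c2 := pm_edge_card hM₂
  have hpos : 0 < M₁.edgeSet.ncard :=
    (Set.ncard_pos (Set.toFinite _)).mpr ⟨_, he₁⟩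
  omega

/-- in a matching-covered graph with at least two edges,
`E \ {e}` is feasible for every edge `e`. -/
theorem stmt9 [Fintype V] {G : SimpleGraph V} (hG : MatchingCovered G)
    (hE : 2 ≤ G.edgeSet.ncard) {e : Sym2 V} (he : e ∈ G.edgeSet) :
    Feasible G (G.edgeSet \ {e}) := by
  classical
  obtain ⟨hconn, hcov⟩ := hG
  induction e using Sym2.ind with
  | _ x y =>
  have hxy : G.Adj x y := G.mem_edgeSet.mp he
  by_cases hx : ∃ z, G.Adj x z ∧ z ≠ y
  · obtain ⟨z, hxz, hzy⟩ := hx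
    exact aux_feasible hcov hxy hxz hzy
  by_cases hy : ∃ z, G.Adj y z ∧ z ≠ x
  · obtain ⟨z, hyz, hzx⟩ := hy
    have := aux_feasible hcov hxy.symm hyz hzx
    rwa [Sym2.eq_swap] at this
  exfalso
  push_neg at hx hy
  obtain ⟨f, hf, hfe⟩ := G.edgeSet.exists_ne_of_one_lt_ncard (by omega) s(x, y)
  induction f using Sym2.ind with
  | _ a b =>
  have hab : G.Adj a b := G.mem_edgeSet.mp hf
  have step : ∀ {u v : V}, G.Adj u v → (u = x ∨ u = y) → (v = x ∨ v = y) := by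
    rintro u v huv (rfl | rfl)
    · exact Or.inr (hx v huv)
    · exact Or.inl (hy v huv)
  have reach : ∀ {c d : V}, G.Walk c d → (c = x ∨ c = y) → (d = x ∨ d = y) := by
    intro c d w
    induction w with
    | nil => exact id
    | cons h _ ih => exact fun hc => ih (step h hc)
  obtain ⟨w⟩ := hconn.preconnected x a
  rcases reach w (Or.inl rfl) with rfl | rfl
  · exact hfe (by rw [hx b hab])
  · exact hfe (by rw [hy b hab, Sym2.eq_swap])
end

section
/- Let G = ⊎(G', P) be obtained from graph G' by attaching a path P (an ear) between two distinct vertices of G'. If X = X₀ ∪ X' with X₀ ⊆ E(P), X' ⊆ E(G'), and |X₀| is even, then X is switching-equivalent to X' in G. -/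
/-!
Walk along the ear `P` from `u` to `v`, switching sides each time an edge of `X₀` is crossed.
The vertices of `P` reached on the far side form `V₀`. Since `|X₀|` is even, both ends `u` and
`v` stay on the near side, and the internal vertices of `P` are not vertices of `G'`, so `V₀`
contains no vertex of `G'`. Hence `∇_G(V₀) = X₀`, and `X₀ ∪ X' = X' ⊕ ∇_G(V₀)` because `X₀` and
`X'` are disjoint.
-/

open SimpleGraph

variable {V : Type*}

/-- `G = ⊎(G', P)`: `G` is obtained from `G'` by attaching the path `p`
(a single ear) between two distinct vertices `u, v` of `G'`, the internal
vertices of `p` being disjoint from `G'`. -/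
structure IsEarAttachment (G' G : SimpleGraph V) {u v : V} (p : G.Walk u v) : Prop where
  ne : u ≠ v
  isPath : p.IsPath
  uMem : u ∈ G'.support
  vMem : v ∈ G'.support
  internal : ∀ w ∈ p.support, w ≠ u → w ≠ v → w ∉ G'.support
  edgeUnion : G.edgeSet = G'.edgeSet ∪ {e | e ∈ p.edges}
  edgeDisj : Disjoint G'.edgeSet {e | e ∈ p.edges}

lemma List.Nodup.countP_mem_eq_ncard {α : Type*} {l : List α} (hl : l.Nodup) {X : Set α}
    [DecidablePred (· ∈ X)] (hX : X ⊆ {a | a ∈ l}) : l.countP (· ∈ X) = X.ncard := by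
  classical
  rw [← hl.card_eq_countP, ← Set.ncard_coe_finset]
  congr
  ext a
  simpa using fun ha => hX ha

namespace SimpleGraph

lemma mk_mem_edgeCut_iff {G : SimpleGraph V} {U : Set V} {x y : V} :
    s(x, y) ∈ edgeCut G U ↔ G.Adj x y ∧ (x ∈ U ↔ y ∉ U) := by
  simp only [edgeCut, Set.mem_ofPred_eq, mem_edgeSet, Sym2.eq_iff]
  constructor
  · rintro ⟨hadj, a, b, ⟨rfl, rfl⟩ | ⟨rfl, rfl⟩, ha, hb⟩ <;> tauto
  · rintro ⟨hadj, hxy⟩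
    by_cases hx : x ∈ U
    · exact ⟨hadj, x, y, Or.inl ⟨rfl, rfl⟩, hx, hxy.mp hx⟩
    · exact ⟨hadj, y, x, Or.inr ⟨rfl, rfl⟩, by tauto, hx⟩

theorem Walk.IsPath.exists_parity_labelling {G : SimpleGraph V} {u v : V} {p : G.Walk u v}
    (hp : p.IsPath) (X : Set (Sym2 V)) [DecidablePred (· ∈ X)] (b : Bool) :
    ∃ f : V → Bool, f u = b ∧ (∀ x y, s(x, y) ∈ p.edges → (f x ≠ f y ↔ s(x, y) ∈ X)) ∧
      (f v = b ↔ Even (p.edges.countP (· ∈ X))) := by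
  classical
  induction p generalizing b with
  | nil => exact ⟨fun _ => b, rfl, by simp, by simp⟩
  | @cons u c v h q ih =>
    rw [cons_isPath_iff] at hp
    obtain ⟨f, hfc, hfedge, hfv⟩ := ih hp.1 (b ^^ decide (s(u, c) ∈ X))
    have hvu : v ≠ u := by rintro rfl; exact hp.2 q.end_mem_support
    refine ⟨Function.update f u b, by simp, ?_, ?_⟩
    · intro x y hxy
      rw [Walk.edges_cons, List.mem_cons] at hxy
      rcases hxy with hxy | hxy
      · have hflip : Function.update f u b u ≠ Function.update f u b c ↔ s(u, c) ∈ X := by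
          rw [Function.update_self, Function.update_of_ne h.ne.symm, hfc]
          cases b <;> simp
        rcases Sym2.eq_iff.mp hxy with ⟨rfl, rfl⟩ | ⟨rfl, rfl⟩
        · exact hflip
        · rwa [ne_comm, Sym2.eq_swap]
      · have hx : x ≠ u := fun hx => hp.2 (hx ▸ q.fst_mem_support_of_mem_edges hxy)
        have hy : y ≠ u := fun hy => hp.2 (hy ▸ q.snd_mem_support_of_mem_edges hxy)
        simpa [hx, hy] using hfedge x y hxy
    · rw [Function.update_of_ne hvu, Walk.edges_cons, List.countP_cons]
      by_cases hX : s(u, c) ∈ X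
      · rw [if_pos (decide_eq_true hX), Nat.even_add_one, ← hfv]
        cases b <;> cases f v <;> simp [hX]
      · simpa [hX] using hfv

end SimpleGraph

theorem IsEarAttachment.edgeCut_labelling_eq {G' G : SimpleGraph V} {u v : V} {p : G.Walk u v}
    (hear : IsEarAttachment G' G p) {X : Set (Sym2 V)} (hX : X ⊆ {e | e ∈ p.edges})
    {f : V → Bool} (hu : f u = false) (hv : f v = false)
    (hf : ∀ x y, s(x, y) ∈ p.edges → (f x ≠ f y ↔ s(x, y) ∈ X)) :
    edgeCut G {w | w ∈ p.support ∧ f w = true} = X := by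
  have hG' : ∀ w ∈ G'.support, ¬(w ∈ p.support ∧ f w = true) := by
    rintro w hw ⟨hwp, hfw⟩
    by_cases hwu : w = u
    · simp_all
    by_cases hwv : w = v
    · simp_all
    exact hear.internal w hwp hwu hwv hw
  ext e
  induction e using Sym2.ind with
  | _ x y =>
  rw [mk_mem_edgeCut_iff]
  by_cases hxy : s(x, y) ∈ p.edges
  · have hx := p.fst_mem_support_of_mem_edges hxy
    have hy := p.snd_mem_support_of_mem_edges hxy
    rw [← hf x y hxy]
    simp only [Set.mem_ofPred_eq, hx, hy, true_and, p.adj_of_mem_edges hxy]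
    cases f x <;> cases f y <;> simp
  · have hadj : G.Adj x y → G'.Adj x y := fun hadj => by
      have := hear.edgeUnion ▸ (G.mem_edgeSet.mpr hadj)
      simpa [hxy] using this
    refine iff_of_false (fun ⟨hGxy, hcut⟩ => ?_) (fun h => hxy (hX h))
    have hG'xy := hadj hGxy
    exact hG' x ⟨y, hG'xy⟩ (hcut.mpr (hG' y ⟨x, hG'xy.symm⟩))

theorem stmt11_general {G' G : SimpleGraph V} {u v : V} {p : G.Walk u v}
    (hear : IsEarAttachment G' G p)
    {X₀ X' : Set (Sym2 V)} (hX₀ : X₀ ⊆ {e | e ∈ p.edges}) (hX' : X' ⊆ G'.edgeSet)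
    (heven : Even X₀.ncard) :
    SwEquiv G (X₀ ∪ X') X' := by
  classical
  obtain ⟨f, hfu, hfedge, hfv⟩ := hear.isPath.exists_parity_labelling X₀ false
  have hfv' : f v = false :=
    hfv.mpr (by rwa [hear.isPath.edges_nodup.countP_mem_eq_ncard hX₀])
  have hdisj : Disjoint X' X₀ := Set.disjoint_of_subset hX' hX₀ hear.edgeDisj
  refine ⟨{w | w ∈ p.support ∧ f w = true}, ?_⟩
  rw [hear.edgeCut_labelling_eq hX₀ hfu hfv' hfedge, hdisj.symmDiff_eq_sup]
  exact Set.union_comm _ _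

/-- if `|X₀|` is even, then `X₀ ∪ X'` is switching-equivalent
to `X'` in `G = ⊎(G', P)`. -/
theorem stmt11 [Fintype V] {G' G : SimpleGraph V} {u v : V} {p : G.Walk u v}
    (hear : IsEarAttachment G' G p)
    {X₀ X' : Set (Sym2 V)} (hX₀ : X₀ ⊆ {e | e ∈ p.edges}) (hX' : X' ⊆ G'.edgeSet)
    (heven : Even X₀.ncard) :
    SwEquiv G (X₀ ∪ X') X' :=
  stmt11_general hear hX₀ hX' heven
end

section
/- Let G = ⊎(G', P) be obtained by attaching a path P between two distinct vertices of G'. If X = X₀ ∪ X' with X₀ ⊆ E(P), X' ⊆ E(G'), and |X₀| is odd, then for every edge e of P, X is switching-equivalent in G to X' ∪ {e}. -/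
open SimpleGraph

variable {V : Type*}

/-- if `|X₀|` is odd, then for every edge `e` of `P`,
`X₀ ∪ X'` is switching-equivalent to `X' ∪ {e}` in `G = ⊎(G', P)`. -/
lemma edges_getElem' {G : SimpleGraph V} {u v : V} (p : G.Walk u v) :
    ∀ i (h : i < p.length),
      p.edges[i]'(by rwa [SimpleGraph.Walk.length_edges]) =
        s(p.getVert i, p.getVert (i+1)) := by
  induction p with
  | nil => intro i h; simp at h
  | cons hadj q ih =>
    intro i h
    cases i with
    | zero => simp [SimpleGraph.Walk.edges_cons]
    | succ k =>
      have hk : k < q.length := by simpa using h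
      simpa [SimpleGraph.Walk.edges_cons] using ih k hk

lemma mem_edges_iff' {G : SimpleGraph V} {u v : V} (p : G.Walk u v) {a : Sym2 V} :
    a ∈ p.edges ↔ ∃ i, i < p.length ∧ a = s(p.getVert i, p.getVert (i+1)) := by
  rw [List.mem_iff_getElem]
  constructor
  · rintro ⟨i, hi, rfl⟩
    have hi' : i < p.length := by rwa [SimpleGraph.Walk.length_edges] at hi
    exact ⟨i, hi', edges_getElem' p i hi'⟩
  · rintro ⟨i, hi, rfl⟩
    exact ⟨i, by rwa [SimpleGraph.Walk.length_edges], edges_getElem' p i hi⟩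

lemma getVert_inj' {G : SimpleGraph V} {u v : V} (p : G.Walk u v) :
    p.IsPath → ∀ i, i ≤ p.length → ∀ j, j ≤ p.length →
      p.getVert i = p.getVert j → i = j := by
  induction p with
  | nil => intro _ i hi j hj _; simp at hi hj; omega
  | cons hadj q ih =>
    intro hp i hi j hj hij
    rw [SimpleGraph.Walk.cons_isPath_iff] at hp
    cases i with
    | zero =>
      cases j with
      | zero => rfl
      | succ k =>
        exfalso
        apply hp.2
        rw [SimpleGraph.Walk.mem_support_iff_exists_getVert]
        exact ⟨k, by simpa using hij.symm, by simpa using hj⟩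
    | succ k =>
      cases j with
      | zero =>
        exfalso
        apply hp.2
        rw [SimpleGraph.Walk.mem_support_iff_exists_getVert]
        exact ⟨k, by simpa using hij, by simpa using hi⟩
      | succ l =>
        have := ih hp.1 k (by simpa using hi) l (by simpa using hj) (by simpa using hij)
        omega

lemma mem_edgeCut_iff' {G : SimpleGraph V} {U : Set V} {a b : V} (hab : a ≠ b)
    (hE : s(a,b) ∈ G.edgeSet) :
    s(a,b) ∈ edgeCut G U ↔ ¬(a ∈ U ↔ b ∈ U) := by
  constructor
  · rintro ⟨-, x, y, hxy, hx, hy⟩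
    rcases Sym2.eq_iff.mp hxy with ⟨rfl, rfl⟩ | ⟨rfl, rfl⟩ <;> tauto
  · intro h
    by_cases ha : a ∈ U
    · exact ⟨hE, a, b, rfl, ha, fun hb => h ⟨fun _ => hb, fun _ => ha⟩⟩
    · exact ⟨hE, b, a, Sym2.eq_swap, by tauto, ha⟩

lemma edgeCut_symmDiff (G : SimpleGraph V) (U W : Set V) :
    edgeCut G (symmDiff U W) = symmDiff (edgeCut G U) (edgeCut G W) := by
  classical
  ext e
  induction e using Sym2.ind with
  | _ a b =>
    by_cases hE : s(a,b) ∈ G.edgeSet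
    · have hab : a ≠ b := (G.mem_edgeSet.mp hE).ne
      rw [Set.mem_symmDiff, mem_edgeCut_iff' hab hE, mem_edgeCut_iff' hab hE,
        mem_edgeCut_iff' hab hE]
      simp only [Set.mem_symmDiff]
      tauto
    · have h1 : s(a,b) ∉ edgeCut G U := fun h => hE h.1
      have h2 : s(a,b) ∉ edgeCut G W := fun h => hE h.1
      have h3 : s(a,b) ∉ edgeCut G (symmDiff U W) := fun h => hE h.1
      simp [Set.mem_symmDiff, h1, h2, h3]

lemma swEquiv_trans' {G : SimpleGraph V} {X Y Z : Set (Sym2 V)}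
    (h1 : SwEquiv G X Y) (h2 : SwEquiv G Y Z) : SwEquiv G X Z := by
  obtain ⟨U, rfl⟩ := h1; obtain ⟨W, rfl⟩ := h2
  exact ⟨symmDiff W U, by rw [edgeCut_symmDiff, symmDiff_assoc]⟩

lemma interval_cut {G' G : SimpleGraph V} {u v : V} {p : G.Walk u v}
    (hear : IsEarAttachment G' G p) {i j : ℕ} (hij : i < j) (hj : j < p.length) :
    edgeCut G {x | ∃ k, i < k ∧ k ≤ j ∧ p.getVert k = x} =
      {s(p.getVert i, p.getVert (i+1)), s(p.getVert j, p.getVert (j+1))} := by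
  have hinj := getVert_inj' p hear.isPath
  set U : Set V := {x | ∃ k, i < k ∧ k ≤ j ∧ p.getVert k = x} with hU
  have hmemU : ∀ k, k ≤ p.length → (p.getVert k ∈ U ↔ (i < k ∧ k ≤ j)) := by
    intro k hk
    constructor
    · rintro ⟨k', h1, h2, hk'⟩
      have : k' = k := hinj k' (by omega) k hk hk'
      omega
    · intro h; exact ⟨k, h.1, h.2, rfl⟩
  have hnotG' : ∀ x ∈ U, x ∉ G'.support := by
    rintro x ⟨k, h1, h2, rfl⟩
    refine hear.internal _ ?_ ?_ ?_
    · rw [SimpleGraph.Walk.mem_support_iff_exists_getVert]; exact ⟨k, rfl, by omega⟩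
    · intro hxu
      have : k = 0 := hinj k (by omega) 0 (by omega) (by simpa using hxu)
      omega
    · intro hxv
      have : k = p.length := hinj k (by omega) p.length le_rfl (by simpa using hxv)
      omega
  have hpe : ∀ k, k < p.length → s(p.getVert k, p.getVert (k+1)) ∈ G.edgeSet :=
    fun k hk => G.mem_edgeSet.mpr (p.adj_getVert_succ hk)
  ext e
  simp only [Set.mem_insert_iff, Set.mem_singleton_iff]
  constructor
  · rintro ⟨heE, x, y, rfl, hx, hy⟩
    rw [hear.edgeUnion] at heE
    rcases heE with hG' | hp
    · exact absurd (G'.mem_support.mpr ⟨y, G'.mem_edgeSet.mp hG'⟩)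
        (hnotG' x hx)
    · have hp' : s(x, y) ∈ p.edges := hp
      rw [mem_edges_iff'] at hp'
      obtain ⟨k, hk, hk2⟩ := hp'
      have hxor : ¬ (p.getVert k ∈ U ↔ p.getVert (k+1) ∈ U) := by
        rcases Sym2.eq_iff.mp hk2 with ⟨h1, h2⟩ | ⟨h1, h2⟩ <;> subst h1 <;> subst h2 <;> tauto
      rw [hmemU k (by omega), hmemU (k+1) (by omega)] at hxor
      have hcase : k = i ∨ k = j := by
        by_contra hcon
        push_neg at hcon
        apply hxor
        constructor <;> intro <;> omega
      rcases hcase with rfl | rfl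
      · exact Or.inl hk2
      · exact Or.inr hk2
  · rintro (rfl | rfl)
    · exact ⟨hpe i (by omega), p.getVert (i+1), p.getVert i, Sym2.eq_swap,
        (hmemU (i+1) (by omega)).2 ⟨by omega, by omega⟩,
        fun h => by have := (hmemU i (by omega)).1 h; omega⟩
    · exact ⟨hpe j (by omega), p.getVert j, p.getVert (j+1), rfl,
        (hmemU j (by omega)).2 ⟨by omega, by omega⟩,
        fun h => by have := (hmemU (j+1) (by omega)).1 h; omega⟩

lemma pair_eq_symmDiff {α : Type*} {a b : α} (h : a ≠ b) :
    ({a, b} : Set α) = symmDiff {a} {b} := by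
  ext x
  simp only [Set.mem_insert_iff, Set.mem_singleton_iff, Set.mem_symmDiff]
  constructor
  · rintro (rfl | rfl)
    · exact Or.inl ⟨rfl, h⟩
    · exact Or.inr ⟨rfl, fun hh => h hh.symm⟩
  · tauto

lemma edgeCut_empty (G : SimpleGraph V) : edgeCut G (∅ : Set V) = ∅ := by
  ext e
  simp [edgeCut]

lemma swap_cut {G' G : SimpleGraph V} {u v : V} {p : G.Walk u v}
    (hear : IsEarAttachment G' G p) {a b : Sym2 V} (ha : a ∈ p.edges) (hb : b ∈ p.edges) :
    ∃ U, edgeCut G U = symmDiff {a} {b} := by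
  obtain ⟨i, hi, rfl⟩ := (mem_edges_iff' p).mp ha
  obtain ⟨j, hj, rfl⟩ := (mem_edges_iff' p).mp hb
  have hinj := getVert_inj' p hear.isPath
  have hne : ∀ i' j', i' < j' → j' < p.length →
      s(p.getVert i', p.getVert (i'+1)) ≠ s(p.getVert j', p.getVert (j'+1)) := by
    intro i' j' h1 h2 hEq
    rcases Sym2.eq_iff.mp hEq with ⟨e1, e2⟩ | ⟨e1, e2⟩
    · have := hinj i' (by omega) j' (by omega) e1; omega
    · have l1 := hinj i' (by omega) (j'+1) (by omega) e1
      have l2 := hinj (i'+1) (by omega) j' (by omega) e2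
      omega
  rcases lt_trichotomy i j with h | rfl | h
  · exact ⟨{x | ∃ k, i < k ∧ k ≤ j ∧ p.getVert k = x},
      by rw [interval_cut hear h hj, pair_eq_symmDiff (hne i j h hj)]⟩
  · exact ⟨∅, by rw [edgeCut_empty, symmDiff_self, Set.bot_eq_empty]⟩
  · refine ⟨{x | ∃ k, j < k ∧ k ≤ i ∧ p.getVert k = x}, ?_⟩
    rw [interval_cut hear h hi, Set.pair_comm,
      pair_eq_symmDiff (Ne.symm (hne j i h hi)), symmDiff_comm]

lemma union_id1 {α : Type*} {X' : Set α} {a e : α} (ha : a ∉ X') (he : e ∉ X') :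
    ({a} ∪ X') = symmDiff (X' ∪ {e}) (symmDiff {a} {e}) := by
  classical
  ext x
  simp only [Set.mem_union, Set.mem_singleton_iff, Set.mem_symmDiff]
  by_cases hxa : x = a <;> by_cases hxe : x = e <;> simp_all <;> tauto

lemma union_id2 {α : Type*} {X₀ X' : Set α} {a b : α} (hab : a ≠ b) (haX : a ∈ X₀)
    (hbX : b ∈ X₀) (ha : a ∉ X') (hb : b ∉ X') :
    X₀ ∪ X' = symmDiff ((X₀ \ {a, b}) ∪ X') (symmDiff {a} {b}) := by
  classical
  ext x
  simp only [Set.mem_union, Set.mem_symmDiff, Set.mem_diff, Set.mem_insert_iff,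
    Set.mem_singleton_iff]
  by_cases hxa : x = a <;> by_cases hxb : x = b <;> simp_all <;> tauto


theorem stmt12 [Fintype V] {G' G : SimpleGraph V} {u v : V} {p : G.Walk u v}
    (hear : IsEarAttachment G' G p)
    {X₀ X' : Set (Sym2 V)} (hX₀ : X₀ ⊆ {e | e ∈ p.edges}) (hX' : X' ⊆ G'.edgeSet)
    (hoddX : Odd X₀.ncard) :
    ∀ e ∈ p.edges, SwEquiv G (X₀ ∪ X') (X' ∪ {e}) := by
  classical
  have hdisj : ∀ x ∈ {e | e ∈ p.edges}, x ∉ X' := fun x hx hxX' =>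
    Set.disjoint_left.mp hear.edgeDisj (hX' hxX') hx
  suffices main : ∀ n : ℕ, Odd n → ∀ X₀ : Set (Sym2 V), X₀ ⊆ {e | e ∈ p.edges} →
      X₀.ncard = n → ∀ e ∈ p.edges, SwEquiv G (X₀ ∪ X') (X' ∪ {e}) by
    exact main X₀.ncard hoddX X₀ hX₀ rfl
  intro n
  induction n using Nat.strong_induction_on with
  | _ n ih =>
    intro hodd X₀ hX₀ hcard e he
    rcases Nat.lt_or_ge n 3 with h3 | h3
    · -- n = 1
      have hn1 : n = 1 := by rcases hodd with ⟨m, hm⟩; omega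
      obtain ⟨a, rfl⟩ := Set.ncard_eq_one.mp (hcard.trans hn1)
      have haP : a ∈ p.edges := hX₀ rfl
      obtain ⟨U, hUc⟩ := swap_cut hear haP he
      exact ⟨U, by rw [hUc]; exact union_id1 (hdisj a haP) (hdisj e he)⟩
    · -- n ≥ 3
      have hfin : X₀.Finite := Set.toFinite X₀
      have hpos : 0 < X₀.ncard := by omega
      obtain ⟨a, haX⟩ := (Set.ncard_pos hfin).mp hpos
      have hfin' : (X₀ \ {a}).Finite := hfin.diff
      have hcard' : (X₀ \ {a}).ncard = n - 1 := by
        rw [Set.ncard_diff_singleton_of_mem haX, hcard]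
      have hpos' : 0 < (X₀ \ {a}).ncard := by omega
      obtain ⟨b, hbX⟩ := (Set.ncard_pos hfin').mp hpos'
      have hab : a ≠ b := fun h => hbX.2 (h ▸ rfl)
      have hsub : ({a, b} : Set (Sym2 V)) ⊆ X₀ := by
        rintro x (rfl | rfl)
        · exact haX
        · exact hbX.1
      have hc2 : (X₀ \ {a, b}).ncard = n - 2 := by
        rw [Set.ncard_diff hsub, Set.ncard_pair hab, hcard]
      have hodd2 : Odd (n - 2) := by rcases hodd with ⟨m, hm⟩; exact ⟨m - 1, by omega⟩
      have hsub2 : X₀ \ {a, b} ⊆ {e | e ∈ p.edges} := fun x hx => hX₀ hx.1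
      have h2 := ih (n - 2) (by omega) hodd2 (X₀ \ {a, b}) hsub2 hc2 e he
      obtain ⟨U, hUc⟩ := swap_cut hear (hX₀ haX) (hX₀ hbX.1)
      refine swEquiv_trans' ⟨U, ?_⟩ h2
      rw [hUc]
      exact union_id2 hab haX hbX.1 (hdisj a (hX₀ haX)) (hdisj b (hX₀ hbX.1))
end

section
/- Let G = ⊎(G', P) be obtained by attaching a path P between two distinct vertices of G'. If an edge set X of G is switching-equivalent to ∅ in G, then X ∩ E(G') is switching-equivalent to ∅ in G'; and if X is switching-equivalent to E(G) in G, then X ∩ E(G') is switching-equivalent to E(G') in G'. -/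
open SimpleGraph

variable {V : Type*}

theorem edgeCut_inter_edgeSet_of_le {G H : SimpleGraph V} (hHG : H ≤ G) (U : Set V) :
    edgeCut G U ∩ H.edgeSet = edgeCut H U := by
  ext e
  constructor
  · rintro ⟨⟨-, hcross⟩, he⟩
    exact ⟨he, hcross⟩
  · rintro ⟨he, hcross⟩
    exact ⟨⟨edgeSet_mono hHG he, hcross⟩, he⟩

theorem SwEquiv.inter_edgeSet_of_le {G H : SimpleGraph V} (hHG : H ≤ G)
    {X Y : Set (Sym2 V)} (hXY : SwEquiv G X Y) :
    SwEquiv H (X ∩ H.edgeSet) (Y ∩ H.edgeSet) := by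
  obtain ⟨U, rfl⟩ := hXY
  exact ⟨U, by rw [Set.inter_symmDiff_distrib_right, edgeCut_inter_edgeSet_of_le hHG]⟩

theorem IsEarAttachment.le {G' G : SimpleGraph V} {u v : V} {p : G.Walk u v}
    (hear : IsEarAttachment G' G p) : G' ≤ G := by
  rw [← edgeSet_subset_edgeSet, hear.edgeUnion]
  exact Set.subset_union_left

theorem stmt13_general {G' G : SimpleGraph V} {u v : V} {p : G.Walk u v}
    (hear : IsEarAttachment G' G p)
    {X : Set (Sym2 V)} :
    (SwEquiv G X ∅ → SwEquiv G' (X ∩ G'.edgeSet) ∅) ∧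
    (SwEquiv G X G.edgeSet → SwEquiv G' (X ∩ G'.edgeSet) G'.edgeSet) := by
  refine ⟨fun h => ?_, fun h => ?_⟩
  · simpa using h.inter_edgeSet_of_le hear.le
  · simpa [Set.inter_eq_right.mpr (edgeSet_mono hear.le)] using h.inter_edgeSet_of_le hear.le

/-- in `G = ⊎(G', P)`, `X ~ ∅` in `G` implies
`X ∩ E(G') ~ ∅` in `G'`, and `X ~ E(G)` in `G` implies `X ∩ E(G') ~ E(G')` in `G'`. -/
theorem stmt13 {G' G : SimpleGraph V} {u v : V} {p : G.Walk u v}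
    (hear : IsEarAttachment G' G p)
    {X : Set (Sym2 V)} (hX : X ⊆ G.edgeSet) :
    (SwEquiv G X ∅ → SwEquiv G' (X ∩ G'.edgeSet) ∅) ∧
    (SwEquiv G X G.edgeSet → SwEquiv G' (X ∩ G'.edgeSet) G'.edgeSet) :=
  stmt13_general hear
end

section
/- Let G be a matching-covered bipartite graph. Then an edge set X of G is non-feasible if and only if X is switching-equivalent to the empty set, i.e., X = ∇_G(U) for some vertex subset U. -/
open SimpleGraph
open scoped symmDiff

variable {V : Type*}

open scoped Classical in
noncomputable def chi (X : Set (Sym2 V)) (e : Sym2 V) : ZMod 2 := if e ∈ X then 1 else 0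

lemma chi_eq_one {X : Set (Sym2 V)} {e : Sym2 V} (h : e ∈ X) : chi X e = 1 := by
  simp [chi, h]

lemma chi_eq_zero {X : Set (Sym2 V)} {e : Sym2 V} (h : e ∉ X) : chi X e = 0 := by
  simp [chi, h]

lemma ncard_setOf_eq {α : Type*} [Fintype α] (P : α → Prop) [DecidablePred P] :
    {x | P x}.ncard = (Finset.univ.filter P).card := by
  rw [← Set.ncard_coe_finset]; congr 1; ext x; simp

lemma ncard_symmDiff_cast {α : Type*} {s t : Set α} (hs : s.Finite) (ht : t.Finite) :
    (((s ∆ t).ncard : ZMod 2)) = (s.ncard : ZMod 2) + t.ncard := by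
  have hfin : (s ∆ t).Finite := (hs.union ht).subset (by
    intro a ha
    rw [Set.mem_symmDiff] at ha
    rcases ha with ⟨h, _⟩ | ⟨h, _⟩ <;> simp [h])
  have h1 : (s ∆ t).ncard + (s ∩ t).ncard = (s ∪ t).ncard := by
    rw [← Set.ncard_union_eq (by
      simp only [Set.disjoint_left, Set.mem_symmDiff]
      rintro a (⟨_, h⟩ | ⟨_, h⟩) ⟨h1, h2⟩ <;> exact (h (by assumption)))
      hfin (hs.inter_of_left t)]
    congr 1
    ext a
    simp only [Set.mem_union, Set.mem_symmDiff, Set.mem_inter_iff]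
    tauto
  have h2 : (s ∪ t).ncard + (s ∩ t).ncard = s.ncard + t.ncard :=
    Set.ncard_union_add_ncard_inter s t hs ht
  have h3 : (s ∆ t).ncard + 2 * (s ∩ t).ncard = s.ncard + t.ncard := by omega
  have := congrArg (Nat.cast : ℕ → ZMod 2) h3
  push_cast at this
  rw [show ((2 : ZMod 2)) = 0 from rfl] at this
  linear_combination this

lemma cut_parity [Fintype V] {G : SimpleGraph V} {M : G.Subgraph}
    (hM : M.IsPerfectMatching) (U : Set V) :
    (((M.edgeSet ∩ edgeCut G U).ncard : ZMod 2)) = U.ncard := by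
  classical
  have hex : ∀ v : V, ∃! w, M.Adj v w := fun v => hM.1 (hM.2 v)
  set m : V → V := fun v => (hex v).choose with hm
  have hmadj : ∀ v, M.Adj v (m v) := fun v => (hex v).choose_spec.1
  have hmuniq : ∀ v w, M.Adj v w → w = m v := fun v w h => (hex v).choose_spec.2 w h
  set s : Finset V := U.toFinset with hs
  set t : Finset (Sym2 V) := M.edgeSet.toFinset with ht
  set f : V → Sym2 V := fun v => s(v, m v) with hf
  have hft : ∀ v ∈ s, f v ∈ t := by
    intro v _
    simp only [ht, Set.mem_toFinset, hf, Subgraph.mem_edgeSet]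
    exact hmadj v
  have hcard := Finset.card_eq_sum_card_fiberwise hft
  have hUs : U.ncard = s.card := by rw [hs, Set.ncard_eq_toFinset_card']
  have hkey : ∀ e ∈ t, (((s.filter (fun v => f v = e)).card : ZMod 2))
      = if e ∈ edgeCut G U then 1 else 0 := by
    intro e he
    rw [ht, Set.mem_toFinset] at he
    induction e with
    | h x y =>
      have hadj : M.Adj x y := (Subgraph.mem_edgeSet).mp he
      have hxy : x ≠ y := hadj.ne
      have hmx : m x = y := (hmuniq x y hadj).symm
      have hmy : m y = x := (hmuniq y x hadj.symm).symm
      have hfilter : s.filter (fun v => f v = s(x, y)) = s ∩ {x, y} := by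
        ext v
        simp only [Finset.mem_filter, Finset.mem_inter, Finset.mem_insert, Finset.mem_singleton]
        constructor
        · rintro ⟨hv, hfe⟩
          rw [hf] at hfe
          simp only [Sym2.eq, Sym2.rel_iff', Prod.mk.injEq, Prod.swap_prod_mk] at hfe
          rcases hfe with ⟨h1, _⟩ | ⟨h1, h2⟩
          · exact ⟨hv, Or.inl h1⟩
          · exact ⟨hv, Or.inr h1⟩
        · rintro ⟨hv, hvxy⟩
          refine ⟨hv, ?_⟩
          rcases hvxy with rfl | rfl
          · rw [hf]; simp [hmx]
          · rw [hf]; simp [hmy, Sym2.eq_swap]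
      rw [hfilter]
      have hcut : s(x, y) ∈ edgeCut G U ↔ ((x ∈ U ∧ y ∉ U) ∨ (y ∈ U ∧ x ∉ U)) := by
        constructor
        · rintro ⟨_, x', y', hexy, hx', hy'⟩
          rw [Sym2.eq_iff] at hexy
          rcases hexy with ⟨rfl, rfl⟩ | ⟨rfl, rfl⟩
          · exact Or.inl ⟨hx', hy'⟩
          · exact Or.inr ⟨hx', hy'⟩
        · rintro (⟨hx, hy⟩ | ⟨hy, hx⟩)
          · exact ⟨M.adj_sub hadj, x, y, rfl, hx, hy⟩
          · exact ⟨M.adj_sub hadj, y, x, Sym2.eq_swap, hy, hx⟩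
      by_cases hx : x ∈ U <;> by_cases hy : y ∈ U
      · have h1 : s ∩ {x, y} = {x, y} := by
          ext v
          simp only [Finset.mem_inter, Finset.mem_insert, Finset.mem_singleton, hs,
            Set.mem_toFinset]
          constructor
          · tauto
          · rintro (rfl | rfl) <;> simp [hx, hy]
        rw [h1, Finset.card_pair hxy]
        simp only [hcut, hx, hy, not_true_eq_false, and_false, false_and, or_self, if_false]
        decide
      · have h1 : s ∩ {x, y} = {x} := by
          ext v
          simp only [Finset.mem_inter, Finset.mem_insert, Finset.mem_singleton, hs,
            Set.mem_toFinset]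
          constructor
          · rintro ⟨hv, rfl | rfl⟩
            · rfl
            · exact absurd hv hy
          · rintro rfl; simp [hx]
        rw [h1, Finset.card_singleton]
        simp [hcut, hx, hy]
      · have h1 : s ∩ {x, y} = {y} := by
          ext v
          simp only [Finset.mem_inter, Finset.mem_insert, Finset.mem_singleton, hs,
            Set.mem_toFinset]
          constructor
          · rintro ⟨hv, rfl | rfl⟩
            · exact absurd hv hx
            · rfl
          · rintro rfl; simp [hy]
        rw [h1, Finset.card_singleton]
        simp [hcut, hx, hy]
      · have h1 : s ∩ {x, y} = ∅ := by
          ext v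
          simp only [Finset.mem_inter, Finset.mem_insert, Finset.mem_singleton, hs,
            Set.mem_toFinset, Finset.notMem_empty, iff_false]
          rintro ⟨hv, rfl | rfl⟩
          · exact hx hv
          · exact hy hv
        rw [h1, Finset.card_empty]
        simp [hcut, hx, hy]
  calc ((M.edgeSet ∩ edgeCut G U).ncard : ZMod 2)
      = ((t.filter (fun e => e ∈ edgeCut G U)).card : ZMod 2) := by
        congr 1
        rw [← Set.ncard_coe_finset]
        congr 1
        ext e
        simp [ht]
    _ = ∑ e ∈ t, if e ∈ edgeCut G U then (1 : ZMod 2) else 0 := by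
        rw [Finset.sum_boole]
    _ = ∑ e ∈ t, ((s.filter (fun v => f v = e)).card : ZMod 2) :=
        Finset.sum_congr rfl (fun e he => (hkey e he).symm)
    _ = ((∑ e ∈ t, (s.filter (fun v => f v = e)).card : ℕ) : ZMod 2) := by push_cast; rfl
    _ = (s.card : ZMod 2) := by rw [← hcard]
    _ = (U.ncard : ZMod 2) := by rw [hUs]

/-- The digraph of `M₀`-alternating moves: matching edges both ways, non-matching edges
from color-0 endpoints. -/
def Arc {G : SimpleGraph V} (M₀ : G.Subgraph) (c : G.Coloring (Fin 2)) (u v : V) : Prop :=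
  M₀.Adj u v ∨ (G.Adj u v ∧ c u = 0 ∧ ¬ M₀.Adj u v)

lemma Arc.adj {G : SimpleGraph V} {M₀ : G.Subgraph} {c : G.Coloring (Fin 2)} {u v : V}
    (h : Arc M₀ c u v) : G.Adj u v := by
  rcases h with h | ⟨h, _, _⟩
  · exact M₀.adj_sub h
  · exact h

noncomputable def wgt (X : Set (Sym2 V)) (l : List V) : ZMod 2 :=
  (List.zipWith (fun a b => chi X s(a, b)) l l.tail).sum

@[simp] lemma wgt_nil {X : Set (Sym2 V)} : wgt X ([] : List V) = 0 := rfl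

@[simp] lemma wgt_single {X : Set (Sym2 V)} {a : V} : wgt X [a] = 0 := rfl

@[simp] lemma wgt_cons_cons {X : Set (Sym2 V)} {a b : V} {l : List V} :
    wgt X (a :: b :: l) = chi X s(a, b) + wgt X (b :: l) := by
  simp [wgt]


lemma wgt_append (X : Set (Sym2 V)) : ∀ (P : List V) (v : V) (Q : List V),
    wgt X (P ++ v :: Q) = wgt X (P ++ [v]) + wgt X (v :: Q) := by
  intro P
  induction P with
  | nil => intro v Q; simp
  | cons a P' ih =>
    intro v Q
    cases P' with
    | nil => simp [add_comm]
    | cons b P'' =>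
      simp only [List.cons_append] at ih ⊢
      rw [wgt_cons_cons, wgt_cons_cons, ih v Q]
      ring

lemma exists_dup_split {l : List V} (h : ¬ l.Nodup) :
    ∃ (P : List V) (x : V) (Q R : List V), l = P ++ x :: Q ++ x :: R := by
  induction l with
  | nil => exact absurd List.nodup_nil h
  | cons a l' ih =>
    by_cases ha : a ∈ l'
    · obtain ⟨s, t, rfl⟩ := List.append_of_mem ha
      exact ⟨[], a, s, t, rfl⟩
    · have : ¬ l'.Nodup := fun hn => h (List.nodup_cons.mpr ⟨ha, hn⟩)
      obtain ⟨P, x, Q, R, rfl⟩ := ih this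
      exact ⟨a :: P, x, Q, R, rfl⟩

lemma wgt_eq_sum (X : Set (Sym2 V)) (d : V) : ∀ l : List V,
    wgt X l = ∑ k ∈ Finset.range (l.length - 1), chi X s(l.getD k d, l.getD (k + 1) d) := by
  intro l
  induction l with
  | nil => simp
  | cons a t ih =>
    cases t with
    | nil => simp
    | cons b t' =>
      simp only [wgt_cons_cons, List.length_cons, Nat.add_sub_cancel]
      rw [Finset.sum_range_succ', ih]
      simp only [List.length_cons, Nat.add_sub_cancel, List.getD_cons_succ, List.getD_cons_zero]
      ring

section Hard

variable [Fintype V] {G : SimpleGraph V} {M₀ : G.Subgraph} {c : G.Coloring (Fin 2)}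
  {X : Set (Sym2 V)}

lemma cycle_even (hM₀ : M₀.IsPerfectMatching)
    (hnf : ∀ M₁ M₂ : G.Subgraph, M₁.IsPerfectMatching → M₂.IsPerfectMatching →
      ((M₁.edgeSet ∩ X).ncard : ZMod 2) = ((M₂.edgeSet ∩ X).ncard : ZMod 2))
    {n : ℕ} [NeZero n] (hn : 3 ≤ n) (g : ZMod n → V) (hinj : Function.Injective g)
    (harc : ∀ i, Arc M₀ c (g i) (g (i + 1))) :
    ∑ i : ZMod n, chi X s(g i, g (i + 1)) = 0 := by
  classical
  have hadj : ∀ i, G.Adj (g i) (g (i + 1)) := fun i => (harc i).adj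
  have hcast : ∀ a : ℕ, 0 < a → a < n → ((a : ℕ) : ZMod n) ≠ 0 := by
    intro a ha han h0
    rw [ZMod.natCast_eq_zero_iff] at h0
    exact absurd (Nat.le_of_dvd ha h0) (by omega)
  have hne2 : ∀ j : ZMod n, g (j + 1) ≠ g (j - 1) := by
    intro j h
    have h0 : ((2 : ℕ) : ZMod n) = 0 := by push_cast; linear_combination (hinj h)
    exact hcast 2 (by omega) (by omega) h0
  have huniq : ∀ x y y', M₀.Adj x y → M₀.Adj x y' → y = y' := by
    intro x y y' h h'
    obtain ⟨w, _, hw⟩ := hM₀.1 (hM₀.2 x)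
    rw [hw y h, hw y' h']
  have hcol : ∀ u v, G.Adj u v → c u ≠ c v := fun u v h => c.valid h
  -- alternation around the cycle
  have hF1 : ∀ j : ZMod n, ¬(M₀.Adj (g j) (g (j + 1)) ∧ M₀.Adj (g (j - 1)) (g j)) := by
    rintro j ⟨h1, h2⟩
    exact hne2 j (huniq (g j) _ _ h1 h2.symm)
  have hF2 : ∀ j : ZMod n, M₀.Adj (g j) (g (j + 1)) ∨ M₀.Adj (g (j - 1)) (g j) := by
    intro j
    by_cases hin : M₀.Adj (g (j - 1)) (g j)
    · exact Or.inr hin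
    · left
      have harc_in := harc (j - 1)
      rw [sub_add_cancel] at harc_in
      rcases harc_in with h | ⟨hadj', hc0, _⟩
      · exact absurd h hin
      · have hcj : c (g j) ≠ 0 := fun hc => (hcol _ _ hadj') (hc0.trans hc.symm)
        rcases harc j with h | ⟨_, hc, _⟩
        · exact h
        · exact absurd hc hcj
  have halt : ∀ j : ZMod n, M₀.Adj (g j) (g (j + 1)) ↔ ¬ M₀.Adj (g j) (g (j - 1)) := by
    intro j
    constructor
    · intro h hin
      exact hF1 j ⟨h, hin.symm⟩
    · intro hin
      rcases hF2 j with h | h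
      · exact h
      · exact absurd h.symm hin
  -- the cycle as a simple graph
  set H : SimpleGraph V :=
    { Adj := fun x y => ∃ i : ZMod n, (x = g i ∧ y = g (i + 1)) ∨ (y = g i ∧ x = g (i + 1))
      symm := ⟨by rintro x y ⟨i, h⟩; exact ⟨i, h.symm⟩⟩
      loopless := ⟨by
        rintro x ⟨i, (⟨h1, h2⟩ | ⟨h1, h2⟩)⟩ <;>
          exact (hadj i).ne (h1.symm.trans h2) ⟩ } with hH
  have hHadj : ∀ x y, H.Adj x y ↔
      ∃ i : ZMod n, (x = g i ∧ y = g (i + 1)) ∨ (y = g i ∧ x = g (i + 1)) := fun x y => Iff.rfl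
  have hHnb : ∀ (j : ZMod n) (y : V), H.Adj (g j) y ↔ (y = g (j + 1) ∨ y = g (j - 1)) := by
    intro j y
    rw [hHadj]
    constructor
    · rintro ⟨i, (⟨h1, h2⟩ | ⟨h1, h2⟩)⟩
      · left; rw [h2, hinj h1]
      · right
        have hji : j = i + 1 := hinj h2
        have : i = j - 1 := by rw [hji]; ring
        rw [h1, this]
    · rintro (rfl | rfl)
      · exact ⟨j, Or.inl ⟨rfl, rfl⟩⟩
      · exact ⟨j - 1, Or.inr ⟨rfl, by rw [sub_add_cancel]⟩⟩
  have hHvx : ∀ x y, H.Adj x y → ∃ j, x = g j := by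
    intro x y h
    rw [hHadj] at h
    rcases h with ⟨i, (⟨h1, _⟩ | ⟨_, h2⟩)⟩
    · exact ⟨i, h1⟩
    · exact ⟨i + 1, h2⟩
  have hHle : H ≤ G := by
    intro x y h
    rw [hHadj] at h
    rcases h with ⟨i, (⟨rfl, rfl⟩ | ⟨rfl, rfl⟩)⟩
    · exact hadj i
    · exact (hadj i).symm
  have hcycH : H.IsCycles := by
    intro v hv
    obtain ⟨w, hw⟩ := hv
    rw [SimpleGraph.mem_neighborSet] at hw
    obtain ⟨j, rfl⟩ := hHvx _ _ hw
    have hns : H.neighborSet (g j) = {g (j + 1), g (j - 1)} := by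
      ext y
      rw [SimpleGraph.mem_neighborSet, hHnb j y]
      simp [Set.mem_insert_iff]
    rw [hns, Set.ncard_pair (hne2 j)]
  have haltH : H.IsAlternating M₀.spanningCoe := by
    intro v w w' hww' hvw hvw'
    obtain ⟨j, rfl⟩ := hHvx _ _ hvw
    rw [hHnb] at hvw hvw'
    simp only [Subgraph.spanningCoe_adj]
    rcases hvw with rfl | rfl <;> rcases hvw' with rfl | rfl
    · exact absurd rfl hww'
    · exact halt j
    · have := halt j; tauto
    · exact absurd rfl hww'
  have hle : M₀.spanningCoe ∆ H ≤ G :=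
    symmDiff_le_sup.trans (sup_le (Subgraph.spanningCoe_le M₀) hHle)
  have hM₁ : (SimpleGraph.toSubgraph (M₀.spanningCoe ∆ H) hle).IsPerfectMatching := by
    have h := Subgraph.IsPerfectMatching.symmDiff_of_isAlternating hM₀ haltH hcycH
    rw [Subgraph.isPerfectMatching_iff] at h ⊢
    intro v
    obtain ⟨w, hw1, hw2⟩ := h v
    simp only [toSubgraph_adj, Subgraph.top_adj] at hw1 hw2 ⊢
    exact ⟨w, hw1, hw2⟩
  have hedge : (SimpleGraph.toSubgraph (M₀.spanningCoe ∆ H) hle).edgeSet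
      = M₀.edgeSet ∆ H.edgeSet := by
    ext ed
    induction ed with
    | h x y =>
      rw [Subgraph.mem_edgeSet, toSubgraph_adj, Set.mem_symmDiff]
      rw [symmDiff_def, sup_adj, sdiff_adj, sdiff_adj, Subgraph.spanningCoe_adj]
      rw [Subgraph.mem_edgeSet, SimpleGraph.mem_edgeSet]
  have hpar := hnf (SimpleGraph.toSubgraph (M₀.spanningCoe ∆ H) hle) M₀ hM₁ hM₀
  have hXsplit : (SimpleGraph.toSubgraph (M₀.spanningCoe ∆ H) hle).edgeSet ∩ X
      = (M₀.edgeSet ∩ X) ∆ (H.edgeSet ∩ X) := by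
    rw [hedge]
    ext ed
    simp only [Set.mem_inter_iff, Set.mem_symmDiff]
    tauto
  have hsplit2 : (((SimpleGraph.toSubgraph (M₀.spanningCoe ∆ H) hle).edgeSet ∩ X).ncard : ZMod 2)
      = ((M₀.edgeSet ∩ X).ncard : ZMod 2) + ((H.edgeSet ∩ X).ncard : ZMod 2) := by
    rw [hXsplit]
    exact ncard_symmDiff_cast (Set.toFinite _) (Set.toFinite _)
  have hzero : ((H.edgeSet ∩ X).ncard : ZMod 2) = 0 := by
    have h := hsplit2.symm.trans hpar
    exact (add_eq_left).mp h
  -- enumerate the cycle edges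
  set e : ZMod n → Sym2 V := fun i => s(g i, g (i + 1)) with he
  have hein : Function.Injective e := by
    intro i j hij
    have hij' : s(g i, g (i + 1)) = s(g j, g (j + 1)) := hij
    rw [Sym2.eq_iff] at hij'
    rcases hij' with ⟨hx, _⟩ | ⟨hx, hy⟩
    · exact hinj hx
    · exfalso
      have h1 : i = j + 1 := hinj hx
      have h2 : i + 1 = j := hinj hy
      have h0 : ((2 : ℕ) : ZMod n) = 0 := by push_cast; linear_combination h2 - h1
      exact hcast 2 (by omega) (by omega) h0
  have hHedge : H.edgeSet = Set.range e := by
    ext ed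
    induction ed with
    | h x y =>
      rw [SimpleGraph.mem_edgeSet, hHadj]
      constructor
      · rintro ⟨i, (⟨rfl, rfl⟩ | ⟨rfl, rfl⟩)⟩
        · exact ⟨i, rfl⟩
        · exact ⟨i, Sym2.eq_swap⟩
      · rintro ⟨i, hi⟩
        have hi' : s(g i, g (i + 1)) = s(x, y) := hi
        rw [Sym2.eq_iff] at hi'
        rcases hi' with ⟨h1, h2⟩ | ⟨h1, h2⟩
        · exact ⟨i, Or.inl ⟨h1.symm, h2.symm⟩⟩
        · exact ⟨i, Or.inr ⟨h1.symm, h2.symm⟩⟩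
  have hrange : Set.range e ∩ X = e '' {i | e i ∈ X} := by
    ext ed
    simp only [Set.mem_inter_iff, Set.mem_range, Set.mem_image, Set.mem_setOf_eq]
    constructor
    · rintro ⟨⟨i, rfl⟩, hXe⟩
      exact ⟨i, hXe, rfl⟩
    · rintro ⟨i, hXe, rfl⟩
      exact ⟨⟨i, rfl⟩, hXe⟩
  have hcount : ((Set.range e ∩ X).ncard : ZMod 2) = ∑ i : ZMod n, chi X (e i) := by
    rw [hrange, Set.ncard_image_of_injective _ hein, ncard_setOf_eq]
    rw [show (∑ i : ZMod n, chi X (e i))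
        = ∑ i : ZMod n, if e i ∈ X then (1 : ZMod 2) else 0 from
      Finset.sum_congr rfl (fun i _ => by by_cases hi : e i ∈ X <;> simp [chi, hi])]
    rw [Finset.sum_boole]
  show ∑ i : ZMod n, chi X (e i) = 0
  rw [← hcount, ← hHedge]
  exact hzero

lemma closed_walk_even (hM₀ : M₀.IsPerfectMatching)
    (hnf : ∀ M₁ M₂ : G.Subgraph, M₁.IsPerfectMatching → M₂.IsPerfectMatching →
      ((M₁.edgeSet ∩ X).ncard : ZMod 2) = ((M₂.edgeSet ∩ X).ncard : ZMod 2)) :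
    ∀ (N : ℕ) (l : List V), l.length ≤ N → l.Chain' (Arc M₀ c) →
      l.head? = l.getLast? → wgt X l = 0 := by
  intro N
  induction N with
  | zero =>
    intro l hlen _ _
    have : l = [] := List.eq_nil_of_length_eq_zero (by omega)
    subst this; simp
  | succ N ih =>
    intro l₀ hlen hchain hclosed
    cases l₀ with
    | nil => simp
    | cons a t =>
      have hlast : (a :: t).getLast? = some a := by rw [← hclosed]; rfl
      cases t with
      | nil => simp
      | cons b t' =>
        set l : List V := a :: b :: t' with hl
        have hlne : l ≠ [] := by simp [hl]
        have hlastval : l.getLast hlne = a := by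
          have h2 := List.getLast?_eq_getLast (l := l) hlne
          rw [hlast] at h2
          exact (Option.some_injective _ h2.symm)
        have hldecomp : l.dropLast ++ [a] = l := by
          rw [← hlastval]
          exact List.dropLast_append_getLast hlne
        by_cases hnd : l.dropLast.Nodup
        · -- simple closed walk
          by_cases hsmall : l.length ≤ 3
          · -- tiny closed walks
            cases t' with
            | nil =>
              exfalso
              have hb : b = a := by
                have h9 : l.getLast? = some b := rfl
                rw [hlast] at h9
                exact Option.some_injective _ h9.symm
              have harcab : Arc M₀ c a b := (List.isChain_cons_cons.mp hchain).1
              exact (Arc.adj harcab).ne hb.symm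
            | cons x t'' =>
              cases t'' with
              | nil =>
                have hx : x = a := by
                  have h9 : l.getLast? = some x := rfl
                  rw [hlast] at h9
                  exact Option.some_injective _ h9.symm
                show wgt X (a :: b :: [x]) = 0
                rw [hx, wgt_cons_cons, wgt_cons_cons, wgt_single,
                  show s(b,a) = s(a,b) from Sym2.eq_swap]
                have hz : ∀ z : ZMod 2, z + (z + 0) = 0 := by decide
                exact hz _
              | cons y t''' =>
                exfalso
                have : l.length = t'''.length + 4 := by simp [hl]
                omega
          · -- a genuine cycle: bridge to `cycle_even`
            have hLL : l.length = t'.length + 2 := by simp [hl]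
            have hlen4 : 4 ≤ l.length := by omega
            set n := l.length - 1 with hn
            have hn3 : 3 ≤ n := by omega
            haveI : NeZero n := ⟨by omega⟩
            haveI : Fact (1 < n) := ⟨by omega⟩
            set g : ZMod n → V := fun i => l.getD i.val a with hg
            have hgetD_last : l.getD n a = a := by
              have h10 : l.getD n a = l.getLast hlne := by
                rw [List.getD_eq_getElem l a (show n < l.length by omega),
                  List.getLast_eq_getElem]
              rw [h10, hlastval]
            have hgetD0 : l.getD 0 a = a := rfl
            have hinj : Function.Injective g := by
              intro i j hij
              have hi := ZMod.val_lt i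
              have hj := ZMod.val_lt j
              have hij' : l.getD i.val a = l.getD j.val a := hij
              rw [List.getD_eq_getElem l a (by omega), List.getD_eq_getElem l a (by omega),
                ← List.getElem_dropLast (xs := l) (i := i.val) (by rw [List.length_dropLast]; omega),
                ← List.getElem_dropLast (xs := l) (i := j.val) (by rw [List.length_dropLast]; omega)] at hij'
              exact ZMod.val_injective n ((List.Nodup.getElem_inj_iff hnd).mp hij')
            have hchain_get := List.isChain_iff_getElem.mp hchain
            have hchain_getD : ∀ k, k < l.length - 1 →
                Arc M₀ c (l.getD k a) (l.getD (k + 1) a) := by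
              intro k hk
              rw [List.getD_eq_getElem l a (by omega), List.getD_eq_getElem l a (by omega)]
              have h2 := hchain_get k (by omega)
              simpa [List.get_eq_getElem] using h2
            have harcg : ∀ i : ZMod n, Arc M₀ c (g i) (g (i + 1)) := by
              intro i
              have hi := ZMod.val_lt i
              have hvadd : (i + 1).val = (i.val + 1) % n := by
                rw [ZMod.val_add, ZMod.val_one]
              show Arc M₀ c (l.getD i.val a) (l.getD (i + 1).val a)
              by_cases hlt : i.val < n - 1
              · have h1 : (i + 1).val = i.val + 1 := by
                  rw [hvadd, Nat.mod_eq_of_lt (by omega)]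
                rw [h1]
                exact hchain_getD i.val (by omega)
              · have hieq : i.val = n - 1 := by omega
                have h1 : (i + 1).val = 0 := by
                  rw [hvadd, hieq, Nat.sub_add_cancel (by omega), Nat.mod_self]
                rw [hieq, h1, hgetD0]
                have h2 := hchain_getD (n - 1) (by omega)
                rw [show n - 1 + 1 = n by omega, hgetD_last] at h2
                exact h2
            have hcyc := cycle_even hM₀ hnf hn3 g hinj harcg
            rw [wgt_eq_sum X a l, ← hn, ← hcyc]
            refine Finset.sum_nbij' (fun k => ((k : ℕ) : ZMod n)) (fun i => i.val) ?_ ?_ ?_ ?_ ?_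
            · intro k _; exact Finset.mem_univ _
            · intro i _
              exact Finset.mem_range.mpr (ZMod.val_lt i)
            · intro k hk
              exact ZMod.val_cast_of_lt (Finset.mem_range.mp hk)
            · intro i _
              exact ZMod.natCast_rightInverse i
            · intro k hk
              have hkn := Finset.mem_range.mp hk
              have e1 : g ((k : ZMod n)) = l.getD k a := by
                show l.getD ((k : ZMod n)).val a = l.getD k a
                rw [ZMod.val_cast_of_lt hkn]
              have e2 : g ((k : ZMod n) + 1) = l.getD (k + 1) a := by
                show l.getD ((k : ZMod n) + 1).val a = l.getD (k + 1) a
                have hvadd : ((k : ZMod n) + 1).val = (k + 1) % n := by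
                  rw [ZMod.val_add, ZMod.val_one, ZMod.val_cast_of_lt hkn]
                rw [hvadd]
                by_cases hk1 : k + 1 < n
                · rw [Nat.mod_eq_of_lt hk1]
                · have hkeq : k + 1 = n := by omega
                  rw [hkeq, Nat.mod_self, hgetD0, hgetD_last]
              rw [e1, e2]
        · -- split at a repeated interior vertex
          obtain ⟨P, v, Q, R, hI⟩ := exists_dup_split hnd
          have hldec' : l = P ++ v :: (Q ++ v :: (R ++ [a])) := by
            rw [← hldecomp, hI]; simp
          have hlen_eq : l.length = P.length + Q.length + R.length + 3 := by
            have h3 := congrArg List.length hldec'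
            simp only [List.length_append, List.length_cons, List.length_singleton, List.length_nil] at h3
            omega
          have hlenN : l.length ≤ N + 1 := hlen
          -- chain facts
          have hch1 : (P ++ [v]).Chain' (Arc M₀ c) ∧
              (v :: (Q ++ v :: (R ++ [a]))).Chain' (Arc M₀ c) := by
            have h4 := hchain
            rw [hldec'] at h4
            exact List.isChain_split.mp h4
          have hch2 := List.isChain_split.mp
            (show List.Chain' (Arc M₀ c) ((v :: Q) ++ v :: (R ++ [a])) from hch1.2)
          have hhead : l.head? = some a := rfl
          have hPa : P = [] → v = a := by
            intro hP
            have h5 : l.head? = some v := by rw [hldec', hP]; rfl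
            rw [hhead] at h5
            exact (Option.some_injective _ h5).symm
          have hw1 : wgt X (v :: (Q ++ [v])) = 0 := by
            refine ih _ ?_ (show List.Chain' (Arc M₀ c) (v :: (Q ++ [v])) from hch2.1) ?_
            · simp only [List.length_cons, List.length_append, List.length_singleton, List.length_nil]
              omega
            · have h6 : (v :: (Q ++ [v])).getLast? = some v := List.getLast?_concat (l := v :: Q)
              rw [h6]; rfl
          have hl' : wgt X (P ++ v :: (R ++ [a])) = 0 := by
            refine ih _ ?_ (List.isChain_split.mpr ⟨hch1.1, hch2.2⟩) ?_
            · simp only [List.length_append, List.length_cons, List.length_singleton, List.length_nil]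
              omega
            · have h7 : (P ++ v :: (R ++ [a])).getLast? = some a := by
                rw [show P ++ v :: (R ++ [a]) = (P ++ v :: R) ++ [a] by simp,
                  List.getLast?_concat]
              rw [h7]
              cases P with
              | nil => simp [hPa rfl]
              | cons p P' =>
                have h8 : l.head? = some p := by rw [hldec']; rfl
                rw [hhead] at h8
                have : p = a := (Option.some_injective _ h8).symm
                subst this; rfl
          -- weight arithmetic
          have e1 : wgt X l = wgt X (P ++ [v]) + wgt X (v :: (Q ++ v :: (R ++ [a]))) := by
            rw [hldec']; exact wgt_append X P v _
          have e2 : wgt X (v :: (Q ++ v :: (R ++ [a]))) =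
              wgt X (v :: (Q ++ [v])) + wgt X (v :: (R ++ [a])) :=
            wgt_append X (v :: Q) v (R ++ [a])
          have e3 : wgt X (P ++ v :: (R ++ [a])) =
              wgt X (P ++ [v]) + wgt X (v :: (R ++ [a])) := wgt_append X P v (R ++ [a])
          calc wgt X l = wgt X (P ++ [v]) + (wgt X (v :: (Q ++ [v])) + wgt X (v :: (R ++ [a]))) := by
                rw [e1, e2]
            _ = wgt X (P ++ [v]) + wgt X (v :: (R ++ [a])) := by rw [hw1]; ring
            _ = wgt X (P ++ v :: (R ++ [a])) := e3.symm
            _ = 0 := hl'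


/-- Weighted reachability in the arc digraph. -/
def RW (M₀ : G.Subgraph) (c : G.Coloring (Fin 2)) (X : Set (Sym2 V)) (a b : V) (w : ZMod 2) :
    Prop :=
  ∃ l : List V, l.Chain' (Arc M₀ c) ∧ l.head? = some a ∧ l.getLast? = some b ∧ wgt X l = w

lemma rw_refl (a : V) : RW M₀ c X a a 0 :=
  ⟨[a], List.isChain_singleton a, rfl, rfl, rfl⟩

lemma rw_step {a b : V} (h : Arc M₀ c a b) : RW M₀ c X a b (chi X s(a, b)) :=
  ⟨[a, b], List.isChain_cons_cons.mpr ⟨h, List.isChain_singleton b⟩, rfl, rfl, by simp⟩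

lemma rw_trans {a b d : V} {w₁ w₂ : ZMod 2} (h₁ : RW M₀ c X a b w₁) (h₂ : RW M₀ c X b d w₂) :
    RW M₀ c X a d (w₁ + w₂) := by
  obtain ⟨l₁, hc₁, hh₁, hl₁, hw₁⟩ := h₁
  obtain ⟨l₂, hc₂, hh₂, hl₂, hw₂⟩ := h₂
  have hne₁ : l₁ ≠ [] := by rintro rfl; simp at hh₁
  have hlast₁ : l₁.getLast hne₁ = b := by
    have h := List.getLast?_eq_getLast (l := l₁) hne₁
    rw [hl₁] at h
    exact Option.some_injective _ h.symm
  have hdec : l₁.dropLast ++ [b] = l₁ := by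
    rw [← hlast₁]; exact List.dropLast_append_getLast hne₁
  cases l₂ with
  | nil => simp at hh₂
  | cons x t =>
    have hx : x = b := Option.some_injective _ hh₂
    subst hx
    refine ⟨l₁.dropLast ++ x :: t, ?_, ?_, ?_, ?_⟩
    · exact List.isChain_split.mpr ⟨hdec.symm ▸ hc₁, hc₂⟩
    · have h := hh₁
      rw [← hdec, List.head?_append] at h
      rw [List.head?_append]
      exact h
    · rw [List.getLast?_append, hl₂]
      rfl
    · rw [wgt_append, hdec, hw₁, hw₂]

lemma rw_closed (hM₀ : M₀.IsPerfectMatching)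
    (hnf : ∀ M₁ M₂ : G.Subgraph, M₁.IsPerfectMatching → M₂.IsPerfectMatching →
      ((M₁.edgeSet ∩ X).ncard : ZMod 2) = ((M₂.edgeSet ∩ X).ncard : ZMod 2))
    {a b : V} {w₁ w₂ : ZMod 2} (h₁ : RW M₀ c X a b w₁) (h₂ : RW M₀ c X b a w₂) :
    w₁ + w₂ = 0 := by
  obtain ⟨l, hch, hh, hl, hw⟩ := rw_trans h₁ h₂
  rw [← hw]
  exact closed_walk_even hM₀ hnf l.length l le_rfl hch (hh.trans hl.symm)

lemma rw_iter {F : V → V} (hF : ∀ x, Arc M₀ c x (F x)) :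
    ∀ (k : ℕ) (x : V), ∃ w, RW M₀ c X x (F^[k] x) w := by
  intro k
  induction k with
  | zero => intro x; exact ⟨0, rw_refl x⟩
  | succ k ih =>
    intro x
    obtain ⟨w, hw⟩ := ih (F x)
    rw [Function.iterate_succ_apply]
    exact ⟨_, rw_trans (rw_step (hF x)) hw⟩

lemma fin2_cases : ∀ p q : Fin 2, p ≠ q → p ≠ 0 → q = 0 := by decide

lemma reach_edge (hM₀ : M₀.IsPerfectMatching)
    (hcov : ∀ e ∈ G.edgeSet, ∃ M : G.Subgraph, M.IsPerfectMatching ∧ e ∈ M.edgeSet)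
    {u v : V} (hadj : G.Adj u v) : ∃ w, RW M₀ c X u v w := by
  classical
  by_cases hM : M₀.Adj u v
  · exact ⟨_, rw_step (Or.inl hM)⟩
  · obtain ⟨M', hM', hmem⟩ := hcov s(u, v) ((SimpleGraph.mem_edgeSet G).mpr hadj)
    have hM'uv : M'.Adj u v := Subgraph.mem_edgeSet.mp hmem
    by_cases hc0 : c u = 0
    · exact ⟨_, rw_step (Or.inr ⟨hadj, hc0, hM⟩)⟩
    · have hcv : c v = 0 := fin2_cases _ _ (c.valid hadj) hc0
      have hexM₀ : ∀ x : V, ∃! y, M₀.Adj x y := fun x => hM₀.1 (hM₀.2 x)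
      have hexM' : ∀ x : V, ∃! y, M'.Adj x y := fun x => hM'.1 (hM'.2 x)
      set p : V → V := fun x => (hexM₀ x).choose with hp
      set q : V → V := fun x => (hexM' x).choose with hq
      have hpadj : ∀ x, M₀.Adj x (p x) := fun x => (hexM₀ x).choose_spec.1
      have hpuniq : ∀ x y, M₀.Adj x y → y = p x := fun x y h => (hexM₀ x).choose_spec.2 y h
      have hqadj : ∀ x, M'.Adj x (q x) := fun x => (hexM' x).choose_spec.1
      have hquniq : ∀ x y, M'.Adj x y → y = q x := fun x y h => (hexM' x).choose_spec.2 y h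
      set F : V → V := fun x => if c x = 0 then q x else p x with hF
      have hFq : ∀ x, c x = 0 → F x = q x := fun x hx => by simp [hF, hx]
      have hFp : ∀ x, c x ≠ 0 → F x = p x := fun x hx => by simp [hF, hx]
      have hFarc : ∀ x, Arc M₀ c x (F x) := by
        intro x
        by_cases hx : c x = 0
        · rw [hFq x hx]
          by_cases hxM : M₀.Adj x (q x)
          · exact Or.inl hxM
          · exact Or.inr ⟨M'.adj_sub (hqadj x), hx, hxM⟩
        · rw [hFp x hx]
          exact Or.inl (hpadj x)
      have hFv : F v = u := by
        rw [hFq v hcv]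
        exact (hquniq v u hM'uv.symm).symm
      have hFinj : Function.Injective F := by
        intro x y hxy
        have hone : ∀ r r' : Fin 2, r ≠ 0 → r' ≠ 0 → r = r' := by decide
        have hopp : ∀ r r' : Fin 2, r ≠ r' → r = 0 → r' ≠ 0 := by decide
        by_cases hx : c x = 0 <;> by_cases hy : c y = 0
        · rw [hFq x hx, hFq y hy] at hxy
          have h1 : M'.Adj (q x) x := (hqadj x).symm
          have h2 : M'.Adj (q x) y := hxy ▸ (hqadj y).symm
          rw [hquniq _ _ h1, hquniq _ _ h2]
        · exfalso
          rw [hFq x hx, hFp y hy] at hxy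
          have hz1 : c (q x) ≠ 0 := hopp _ _ (c.valid (M'.adj_sub (hqadj x))) hx
          have hz2 : c (p y) ≠ 0 := by rw [← hxy]; exact hz1
          exact (c.valid (M₀.adj_sub (hpadj y))) (hone _ _ hy hz2)
        · exfalso
          rw [hFp x hx, hFq y hy] at hxy
          have hz1 : c (q y) ≠ 0 := hopp _ _ (c.valid (M'.adj_sub (hqadj y))) hy
          have hz2 : c (p x) ≠ 0 := by rw [hxy]; exact hz1
          exact (c.valid (M₀.adj_sub (hpadj x))) (hone _ _ hx hz2)
        · rw [hFp x hx, hFp y hy] at hxy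
          have h1 : M₀.Adj (p x) x := (hpadj x).symm
          have h2 : M₀.Adj (p x) y := hxy ▸ (hpadj y).symm
          rw [hpuniq _ _ h1, hpuniq _ _ h2]
      have hbij : Function.Bijective F := Finite.injective_iff_bijective.mp hFinj
      set σ : Equiv.Perm V := Equiv.ofBijective F hbij with hσdef
      have hσpow : ∀ (k : ℕ) (x : V), (σ ^ k) x = F^[k] x := by
        intro k
        induction k with
        | zero => intro x; rfl
        | succ k ih =>
          intro x
          rw [pow_succ, Equiv.Perm.mul_apply, Function.iterate_succ_apply]
          exact ih (F x)
      have horder : ∃ m : ℕ, 0 < m ∧ F^[m] v = v := by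
        refine ⟨orderOf σ, orderOf_pos σ, ?_⟩
        rw [← hσpow, pow_orderOf_eq_one σ]
        rfl
      obtain ⟨m, hm, hv⟩ := horder
      obtain ⟨w, hw⟩ := rw_iter hFarc (m - 1) u
      have hlast : F^[m - 1] u = v := by
        rw [← hFv, ← Function.iterate_succ_apply, Nat.succ_eq_add_one,
          Nat.sub_add_cancel (by omega)]
        exact hv
      exact ⟨w, hlast ▸ hw⟩

lemma reach_all (hM₀ : M₀.IsPerfectMatching)
    (hcov : ∀ e ∈ G.edgeSet, ∃ M : G.Subgraph, M.IsPerfectMatching ∧ e ∈ M.edgeSet)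
    (hconn : G.Connected) : ∀ u v : V, ∃ w, RW M₀ c X u v w := by
  intro u v
  obtain ⟨pw⟩ := hconn.preconnected u v
  induction pw with
  | nil => exact ⟨0, rw_refl _⟩
  | cons h pw ih =>
    obtain ⟨w₂, hw₂⟩ := ih
    obtain ⟨w₁, hw₁⟩ := reach_edge hM₀ hcov h
    exact ⟨w₁ + w₂, rw_trans hw₁ hw₂⟩


lemma zmod2_sum_one : ∀ a b : ZMod 2, a + b = 1 → (a = 1 ∧ b = 0) ∨ (a = 0 ∧ b = 1) := by decide

lemma zmod2_ne_one : ∀ a : ZMod 2, a ≠ 1 → a = 0 := by decide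

lemma zmod2_add_self : ∀ a : ZMod 2, a + a = 0 := by decide

include c in
lemma nonfeasible_is_cut (hconn : G.Connected)
    (hcov : ∀ e ∈ G.edgeSet, ∃ M : G.Subgraph, M.IsPerfectMatching ∧ e ∈ M.edgeSet)
    (hM₀ : M₀.IsPerfectMatching)
    (hnf : ∀ M₁ M₂ : G.Subgraph, M₁.IsPerfectMatching → M₂.IsPerfectMatching →
      ((M₁.edgeSet ∩ X).ncard : ZMod 2) = ((M₂.edgeSet ∩ X).ncard : ZMod 2))
    (hX : X ⊆ G.edgeSet) :
    ∃ U : Set V, X = edgeCut G U := by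
  classical
  have hne : Nonempty V := hconn.nonempty
  obtain ⟨r⟩ := hne
  have htot := reach_all (M₀ := M₀) (c := c) (X := X) hM₀ hcov hconn
  set pfun : V → ZMod 2 := fun v => (htot r v).choose with hpdef
  have hpfun : ∀ v, RW M₀ c X r v (pfun v) := fun v => (htot r v).choose_spec
  have hpuniq : ∀ v w, RW M₀ c X r v w → w = pfun v := by
    intro v w hw
    obtain ⟨w', hw'⟩ := htot v r
    have h1 := rw_closed hM₀ hnf hw hw'
    have h2 := rw_closed hM₀ hnf (hpfun v) hw'
    linear_combination h1 - h2
  have hedgeRel : ∀ u v : V, G.Adj u v → pfun u + pfun v = chi X s(u, v) := by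
    intro u v h
    have harc : Arc M₀ c u v ∨ Arc M₀ c v u := by
      by_cases hM : M₀.Adj u v
      · exact Or.inl (Or.inl hM)
      · by_cases hc0 : c u = 0
        · exact Or.inl (Or.inr ⟨h, hc0, hM⟩)
        · refine Or.inr (Or.inr ⟨h.symm, fin2_cases _ _ (c.valid h) hc0, fun hM' => hM hM'.symm⟩)
    rcases harc with ha | ha
    · have h1 := rw_trans (hpfun u) (rw_step ha)
      have h2 := hpuniq v _ h1
      linear_combination - h2 + zmod2_add_self (pfun u)
    · have h1 := rw_trans (hpfun v) (rw_step ha)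
      have h2 := hpuniq u _ h1
      rw [show s(u, v) = s(v, u) from Sym2.eq_swap]
      linear_combination - h2 + zmod2_add_self (pfun v)
  refine ⟨{v | pfun v = 1}, ?_⟩
  ext ed
  induction ed with
  | h x y =>
    constructor
    · intro hXe
      have hadj : G.Adj x y := (SimpleGraph.mem_edgeSet G).mp (hX hXe)
      have h1 : pfun x + pfun y = 1 := by
        rw [hedgeRel x y hadj]
        exact chi_eq_one hXe
      rcases zmod2_sum_one _ _ h1 with ⟨ha, hb⟩ | ⟨ha, hb⟩
      · exact ⟨hX hXe, x, y, rfl, ha, by simp [hb]⟩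
      · exact ⟨hX hXe, y, x, Sym2.eq_swap, hb, by simp [ha]⟩
    · rintro ⟨hed, x', y', hexy, hx', hy'⟩
      have hadj : G.Adj x' y' := by
        rw [hexy] at hed
        exact (SimpleGraph.mem_edgeSet G).mp hed
      have hx1 : pfun x' = 1 := hx'
      have hy0 : pfun y' = 0 := zmod2_ne_one _ hy'
      have h1 : chi X s(x', y') = 1 := by
        rw [← hedgeRel x' y' hadj, hx1, hy0]
        rfl
      have h2 : s(x', y') ∈ X := by
        by_contra hcon
        rw [chi_eq_zero hcon] at h1
        exact absurd h1 (by decide)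
      rw [hexy]
      exact h2

end Hard

/-- in a matching-covered bipartite graph, an edge set is
non-feasible iff it is switching-equivalent to `∅`. -/
theorem stmt14 [Fintype V] {G : SimpleGraph V} (hG : MatchingCovered G)
    (hbip : G.Colorable 2) {X : Set (Sym2 V)} (hX : X ⊆ G.edgeSet) :
    ¬ Feasible G X ↔ SwEquiv G X ∅ := by
  constructor
  · intro hnf
    by_cases hE : ∃ e₀, e₀ ∈ G.edgeSet
    · obtain ⟨e₀, he₀⟩ := hE
      obtain ⟨M₀, hM₀, _⟩ := hG.2 e₀ he₀
      obtain ⟨c⟩ := hbip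
      have hnf' : ∀ M₁ M₂ : G.Subgraph, M₁.IsPerfectMatching → M₂.IsPerfectMatching →
          ((M₁.edgeSet ∩ X).ncard : ZMod 2) = ((M₂.edgeSet ∩ X).ncard : ZMod 2) := by
        intro M₁ M₂ h₁ h₂
        rw [ZMod.natCast_eq_natCast_iff']
        by_contra hcon
        exact hnf ⟨M₁, M₂, h₁, h₂, hcon⟩
      obtain ⟨U, hU⟩ := nonfeasible_is_cut (M₀ := M₀) (c := c) hG.1 hG.2 hM₀ hnf' hX
      refine ⟨U, ?_⟩
      rw [hU]
      ext e
      simp [Set.mem_symmDiff]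
    · push_neg at hE
      have hXE : X = ∅ := by
        rw [Set.eq_empty_iff_forall_notMem]
        intro e he
        exact hE e (hX he)
      refine ⟨∅, ?_⟩
      rw [hXE]
      ext e
      simp [Set.mem_symmDiff, edgeCut]
  · rintro ⟨U, hU⟩ hfe
    obtain ⟨M₁, M₂, h₁, h₂, hne⟩ := hfe
    have hXcut : X = edgeCut G U := by
      rw [hU]
      ext e
      simp [Set.mem_symmDiff]
    apply hne
    rw [← Nat.ModEq]
    have hc1 : ((M₁.edgeSet ∩ X).ncard : ZMod 2) = ((M₂.edgeSet ∩ X).ncard : ZMod 2) := by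
      rw [hXcut, cut_parity h₁ U, cut_parity h₂ U]
    exact (ZMod.natCast_eq_natCast_iff _ _ 2).mp hc1
end

section
/- Let G₁ and G₂ be vertex-disjoint matching-covered graphs, each with at least two edges, with edges e₁ = x₁y₁ ∈ E(G₁) and e₂ = x₂y₂ ∈ E(G₂). Let G be obtained from G₁ − e₁ and G₂ − e₂ by adding the edges f₁ = x₁x₂ and f₂ = y₁y₂. Then G is matching-covered. -/
open SimpleGraph

variable {V : Type*}

/-- The graph `G₁ #_{e₁,e₂} G₂`: delete edges `e₁ = x₁y₁` from `G₁` and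
`e₂ = x₂y₂` from `G₂`, and add the edges `f₁ = x₁x₂` and `f₂ = y₁y₂`. -/
def splice {V₁ V₂ : Type*} (G₁ : SimpleGraph V₁) (G₂ : SimpleGraph V₂)
    (x₁ y₁ : V₁) (x₂ y₂ : V₂) : SimpleGraph (V₁ ⊕ V₂) where
  Adj a b := match a, b with
    | .inl a, .inl b => (G₁.deleteEdges {s(x₁, y₁)}).Adj a b
    | .inr a, .inr b => (G₂.deleteEdges {s(x₂, y₂)}).Adj a b
    | .inl a, .inr b => (a = x₁ ∧ b = x₂) ∨ (a = y₁ ∧ b = y₂)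
    | .inr a, .inl b => (b = x₁ ∧ a = x₂) ∨ (b = y₁ ∧ a = y₂)
  symm := by
    constructor
    rintro (a | a) (b | b) h
    · exact (G₁.deleteEdges {s(x₁, y₁)}).adj_symm h
    · exact h
    · exact h
    · exact (G₂.deleteEdges {s(x₂, y₂)}).adj_symm h
  loopless := by
    constructor
    rintro (a | a) h
    · exact (G₁.deleteEdges {s(x₁, y₁)}).irrefl h
    · exact (G₂.deleteEdges {s(x₂, y₂)}).irrefl h

/-! ### Auxiliary lemmas -/

lemma closed_of_reachable {H : SimpleGraph V} {S : Set V}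
    (hS : ∀ ⦃u v⦄, u ∈ S → H.Adj u v → v ∈ S) {a b : V} (ha : a ∈ S)
    (h : H.Reachable a b) : b ∈ S := by
  obtain ⟨w⟩ := h
  induction w with
  | nil => exact ha
  | cons hadj p ih => exact ih (hS ha hadj)

/-- In a matching-covered graph with at least two edges, every edge is avoided
by some perfect matching. -/
lemma exists_pm_avoiding {G : SimpleGraph V} (h : MatchingCovered G)
    {x y : V} (he : G.Adj x y) (hE : 2 ≤ G.edgeSet.ncard) :
    ∃ N : G.Subgraph, N.IsPerfectMatching ∧ s(x, y) ∉ N.edgeSet := by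
  have key : ∃ w, (G.Adj x w ∧ w ≠ y) ∨ (G.Adj y w ∧ w ≠ x) := by
    by_contra hcon
    push_neg at hcon
    have hclosed : ∀ ⦃u v⦄, u ∈ ({x, y} : Set V) → G.Adj u v → v ∈ ({x, y} : Set V) := by
      rintro u v (rfl | rfl) hadj
      · right; exact (hcon v).1 hadj
      · left; exact (hcon v).2 hadj
    have hsub : G.edgeSet ⊆ {s(x, y)} := by
      rintro e he'
      induction e with
      | h u v =>
        have hu : u ∈ ({x, y} : Set V) :=
          closed_of_reachable hclosed (Set.mem_insert x {y}) (h.1.preconnected x u)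
        have hv : v ∈ ({x, y} : Set V) := hclosed hu he'
        have hne : u ≠ v := (SimpleGraph.Adj.ne he')
        rcases hu with rfl | rfl <;> rcases hv with rfl | rfl <;>
          simp_all [Sym2.eq_swap]
    have : G.edgeSet.ncard ≤ 1 := by
      calc G.edgeSet.ncard ≤ ({s(x, y)} : Set (Sym2 V)).ncard :=
            Set.ncard_le_ncard hsub (Set.finite_singleton _)
        _ = 1 := Set.ncard_singleton _
    omega
  obtain ⟨w, hw | hw⟩ := key
  · obtain ⟨M, hM, hMe⟩ := h.2 s(x, w) (by exact hw.1)
    refine ⟨M, hM, fun hmem => ?_⟩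
    rw [Subgraph.mem_edgeSet] at hMe hmem
    obtain ⟨z, hz, huniq⟩ := hM.1 (hM.2 x)
    exact hw.2 ((huniq w hMe).trans (huniq y hmem).symm)
  · obtain ⟨M, hM, hMe⟩ := h.2 s(y, w) (by exact hw.1)
    refine ⟨M, hM, fun hmem => ?_⟩
    rw [Subgraph.mem_edgeSet] at hMe hmem
    obtain ⟨z, hz, huniq⟩ := hM.1 (hM.2 y)
    exact hw.2 ((huniq w hMe).trans (huniq x hmem.symm).symm)

/-- In a finite matching-covered graph with at least two edges, no edge is a bridge. -/
lemma del_reachable [Fintype V] {G : SimpleGraph V}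
    (h : MatchingCovered G) {x y : V} (he : G.Adj x y) (hE : 2 ≤ G.edgeSet.ncard) :
    (G.deleteEdges {s(x, y)}).Reachable x y := by
  classical
  by_contra hreach
  set G' := G.deleteEdges {s(x, y)} with hG'
  set c := G'.connectedComponentMk x with hc
  set C := c.supp with hCdef
  have hxC : x ∈ C := rfl
  have hyC : y ∉ C := by
    intro hy
    exact hreach (((ConnectedComponent.eq).1 ((ConnectedComponent.mem_supp_iff _ _).1 hy)).symm)
  obtain ⟨M, hM, hMxy⟩ := h.2 s(x, y) he
  obtain ⟨N, hN, hNxy⟩ := exists_pm_avoiding h he hE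
  rw [Subgraph.mem_edgeSet] at hMxy hNxy
  -- the matching `N` (avoiding `xy`) shows `|C|` is even
  have hNle : N.spanningCoe ≤ G' := by
    intro u v huv
    simp only [Subgraph.spanningCoe_adj] at huv
    rw [hG', deleteEdges_adj]
    refine ⟨N.adj_sub huv, ?_⟩
    simp only [Set.mem_singleton_iff, Sym2.eq_iff]
    rintro (⟨rfl, rfl⟩ | ⟨rfl, rfl⟩)
    · exact hNxy huv
    · exact hNxy huv.symm
  have hN' : (G'.toSubgraph N.spanningCoe hNle).IsPerfectMatching :=
    (Subgraph.IsPerfectMatching.toSubgraph_iff hNle).2 hN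
  have hCeven : Even C.ncard := by
    have hm := hN'.induce_connectedComponent_isMatching c
    haveI : Fintype ((G'.toSubgraph N.spanningCoe hNle).induce C).verts :=
      Fintype.ofFinite _
    have := hm.even_card
    have hverts : ((G'.toSubgraph N.spanningCoe hNle).induce C).verts = C := rfl
    rw [Set.ncard_eq_toFinset_card' C]
    convert this using 2
    · exact (Set.toFinset_congr hverts.symm).trans (by congr!)
  -- the matching `M` (containing `xy`) shows `|C \ {x}|` is even
  have hMux : ∀ w, M.Adj x w → w = y := fun w hw => by
    obtain ⟨z, hz, huniq⟩ := hM.1 (hM.2 x)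
    exact (huniq w hw).trans (huniq y hMxy).symm
  have hMuy : ∀ w, M.Adj y w → w = x := fun w hw => by
    obtain ⟨z, hz, huniq⟩ := hM.1 (hM.2 y)
    exact (huniq w hw).trans (huniq x hMxy.symm).symm
  set D : G'.Subgraph :=
    { verts := Set.univ \ {x, y}
      Adj := fun u v => M.Adj u v ∧ s(u, v) ≠ s(x, y)
      adj_sub := fun {u v} huv => by
        rw [hG', deleteEdges_adj]
        refine ⟨M.adj_sub huv.1, ?_⟩
        intro hmem
        exact huv.2 (Set.mem_singleton_iff.1 hmem)
      edge_vert := fun {u v} huv => by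
        refine ⟨trivial, ?_⟩
        rintro (rfl | rfl)
        · exact huv.2 (by rw [hMux v huv.1])
        · exact huv.2 (by rw [hMuy v huv.1, Sym2.eq_swap])
      symm := ⟨fun u v huv => ⟨huv.1.symm, fun hh => huv.2 (Sym2.eq_swap.trans hh)⟩⟩ } with hD
  have hDmatch : D.IsMatching := by
    rintro v ⟨-, hv⟩
    simp only [Set.mem_insert_iff, Set.mem_singleton_iff] at hv
    push_neg at hv
    obtain ⟨w, hw, huniq⟩ := hM.1 (hM.2 v)
    refine ⟨w, ⟨hw, ?_⟩, fun z hz => huniq z hz.1⟩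
    intro heq
    rw [Sym2.eq_iff] at heq
    rcases heq with ⟨rfl, rfl⟩ | ⟨rfl, rfl⟩
    · exact hv.1 rfl
    · exact hv.2 rfl
  have hODD : Even ((C \ {x}).ncard) := by
    have hm := hDmatch.induce_connectedComponent c
    haveI : Fintype (D.induce (D.verts ∩ C)).verts := Fintype.ofFinite _
    have hEv := hm.even_card
    have hverts : (D.induce (D.verts ∩ C)).verts = C \ {x} := by
      show D.verts ∩ C = C \ {x}
      rw [hD]
      ext v
      simp only [Set.mem_inter_iff, Set.mem_diff, Set.mem_univ, true_and,
        Set.mem_insert_iff, Set.mem_singleton_iff]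
      constructor
      · rintro ⟨hne, hvC⟩; exact ⟨hvC, fun hvx => hne (Or.inl hvx)⟩
      · rintro ⟨hvC, hvx⟩
        refine ⟨?_, hvC⟩
        rintro (rfl | rfl)
        · exact hvx rfl
        · exact hyC hvC
    rw [Set.ncard_eq_toFinset_card' (C \ {x})]
    convert hEv using 2
    exact (Set.toFinset_congr hverts.symm).trans (by congr!)
  have hx1 : (C \ {x}).ncard + 1 = C.ncard :=
    Set.ncard_diff_singleton_add_one hxC (Set.toFinite C)
  rw [← hx1] at hCeven
  rw [Nat.even_add_one] at hCeven
  exact hCeven hODD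

lemma del_connected' {G : SimpleGraph V} {x y : V}
    (hconn : G.Connected) (hr : (G.deleteEdges {s(x, y)}).Reachable x y) :
    (G.deleteEdges {s(x, y)}).Connected := by
  have hpre : ∀ u v : V, G.Reachable u v → (G.deleteEdges {s(x, y)}).Reachable u v := by
    intro u v huv
    obtain ⟨w⟩ := huv
    induction w with
    | nil => exact Reachable.refl _
    | @cons a b c hadj p ih =>
      refine Reachable.trans ?_ ih
      by_cases hab : s(a, b) = s(x, y)
      · rw [Sym2.eq_iff] at hab
        rcases hab with ⟨rfl, rfl⟩ | ⟨rfl, rfl⟩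
        · exact hr
        · exact hr.symm
      · exact (SimpleGraph.deleteEdges_adj.2 ⟨hadj, by simpa using hab⟩).reachable
  haveI : Nonempty V := hconn.nonempty
  exact ⟨fun u v => hpre u v (hconn.preconnected u v)⟩

lemma pm_unique {G : SimpleGraph V} {M : G.Subgraph}
    (hM : M.IsPerfectMatching) {a b c : V} (h1 : M.Adj a b) (h2 : M.Adj a c) : b = c := by
  obtain ⟨z, _, hu⟩ := hM.1 (hM.2 a)
  exact (hu b h1).trans (hu c h2).symm

section Cross
variable {V₁ V₂ : Type*} {G₁ : SimpleGraph V₁} {G₂ : SimpleGraph V₂} {x₁ y₁ : V₁} {x₂ y₂ : V₂}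

/-- Combination of matchings `M₁ ∋ e₁`, `M₂ ∋ e₂`: drop `e₁, e₂`, add both cross edges. -/
def crossSub (M₁ : G₁.Subgraph) (M₂ : G₂.Subgraph) :
    (splice G₁ G₂ x₁ y₁ x₂ y₂).Subgraph where
  verts := Set.univ
  Adj a b := match a, b with
    | .inl a, .inl b => M₁.Adj a b ∧ s(a, b) ≠ s(x₁, y₁)
    | .inr a, .inr b => M₂.Adj a b ∧ s(a, b) ≠ s(x₂, y₂)
    | .inl a, .inr b => (a = x₁ ∧ b = x₂) ∨ (a = y₁ ∧ b = y₂)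
    | .inr a, .inl b => (b = x₁ ∧ a = x₂) ∨ (b = y₁ ∧ a = y₂)
  adj_sub := by
    rintro (a | a) (b | b) h
    · show (G₁.deleteEdges {s(x₁, y₁)}).Adj a b
      rw [deleteEdges_adj]
      exact ⟨M₁.adj_sub h.1, fun hm => h.2 (Set.mem_singleton_iff.1 hm)⟩
    · exact h
    · exact h
    · show (G₂.deleteEdges {s(x₂, y₂)}).Adj a b
      rw [deleteEdges_adj]
      exact ⟨M₂.adj_sub h.1, fun hm => h.2 (Set.mem_singleton_iff.1 hm)⟩
  edge_vert := fun _ => Set.mem_univ _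
  symm := by
    constructor
    rintro (a | a) (b | b) h
    · exact ⟨h.1.symm, fun hh => h.2 (Sym2.eq_swap.trans hh)⟩
    · exact h
    · exact h
    · exact ⟨h.1.symm, fun hh => h.2 (Sym2.eq_swap.trans hh)⟩

lemma crossSub_pm {M₁ : G₁.Subgraph} {M₂ : G₂.Subgraph}
    (hM₁ : M₁.IsPerfectMatching) (hM₂ : M₂.IsPerfectMatching)
    (hM₁e : M₁.Adj x₁ y₁) (hM₂e : M₂.Adj x₂ y₂)
    (hne₁ : x₁ ≠ y₁) (hne₂ : x₂ ≠ y₂) :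
    (crossSub (x₁ := x₁) (y₁ := y₁) (x₂ := x₂) (y₂ := y₂) M₁ M₂).IsPerfectMatching := by
  constructor
  · rintro (a | a) -
    · by_cases hax : a = x₁
      · subst hax
        refine ⟨Sum.inr x₂, Or.inl ⟨rfl, rfl⟩, ?_⟩
        rintro (w | w) hw
        · exact absurd (pm_unique hM₁ hw.1 hM₁e ▸ rfl) hw.2
        · rcases hw with ⟨-, rfl⟩ | ⟨h1, -⟩
          · rfl
          · exact absurd h1 hne₁
      · by_cases hay : a = y₁
        · subst hay
          refine ⟨Sum.inr y₂, Or.inr ⟨rfl, rfl⟩, ?_⟩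
          rintro (w | w) hw
          · refine absurd ?_ hw.2
            rw [pm_unique hM₁ hw.1 hM₁e.symm, Sym2.eq_swap]
          · rcases hw with ⟨h1, -⟩ | ⟨-, rfl⟩
            · exact absurd h1.symm hne₁
            · rfl
        · obtain ⟨b, hb, hu⟩ := hM₁.1 (hM₁.2 a)
          refine ⟨Sum.inl b, ⟨hb, ?_⟩, ?_⟩
          · intro heq
            rw [Sym2.eq_iff] at heq
            rcases heq with ⟨h1, -⟩ | ⟨h1, -⟩
            · exact hax h1
            · exact hay h1
          · rintro (w | w) hw
            · exact congrArg Sum.inl (hu w hw.1)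
            · rcases hw with ⟨h1, -⟩ | ⟨h1, -⟩
              · exact absurd h1 hax
              · exact absurd h1 hay
    · by_cases hax : a = x₂
      · subst hax
        refine ⟨Sum.inl x₁, Or.inl ⟨rfl, rfl⟩, ?_⟩
        rintro (w | w) hw
        · rcases hw with ⟨rfl, -⟩ | ⟨-, h2⟩
          · rfl
          · exact absurd h2.symm hne₂.symm
        · exact absurd (pm_unique hM₂ hw.1 hM₂e ▸ rfl) hw.2
      · by_cases hay : a = y₂
        · subst hay
          refine ⟨Sum.inl y₁, Or.inr ⟨rfl, rfl⟩, ?_⟩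
          rintro (w | w) hw
          · rcases hw with ⟨-, h2⟩ | ⟨rfl, -⟩
            · exact absurd h2 hne₂.symm
            · rfl
          · refine absurd ?_ hw.2
            rw [pm_unique hM₂ hw.1 hM₂e.symm, Sym2.eq_swap]
        · obtain ⟨b, hb, hu⟩ := hM₂.1 (hM₂.2 a)
          refine ⟨Sum.inr b, ⟨hb, ?_⟩, ?_⟩
          · intro heq
            rw [Sym2.eq_iff] at heq
            rcases heq with ⟨h1, -⟩ | ⟨h1, -⟩
            · exact hax h1
            · exact hay h1
          · rintro (w | w) hw
            · rcases hw with ⟨-, h2⟩ | ⟨-, h2⟩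
              · exact absurd h2 hax
              · exact absurd h2 hay
            · exact congrArg Sum.inr (hu w hw.1)
  · exact fun v => Set.mem_univ v

/-- Combination of matchings avoiding `e₁, e₂`: no cross edges. -/
def sepSub (N₁ : G₁.Subgraph) (N₂ : G₂.Subgraph)
    (hN₁ : ¬N₁.Adj x₁ y₁) (hN₂ : ¬N₂.Adj x₂ y₂) :
    (splice G₁ G₂ x₁ y₁ x₂ y₂).Subgraph where
  verts := Set.univ
  Adj a b := match a, b with
    | .inl a, .inl b => N₁.Adj a b
    | .inr a, .inr b => N₂.Adj a b
    | .inl _, .inr _ => False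
    | .inr _, .inl _ => False
  adj_sub := by
    rintro (a | a) (b | b) h
    · show (G₁.deleteEdges {s(x₁, y₁)}).Adj a b
      rw [deleteEdges_adj]
      refine ⟨N₁.adj_sub h, fun hm => ?_⟩
      rw [Set.mem_singleton_iff, Sym2.eq_iff] at hm
      rcases hm with ⟨rfl, rfl⟩ | ⟨rfl, rfl⟩
      · exact hN₁ h
      · exact hN₁ h.symm
    · exact h.elim
    · exact h.elim
    · show (G₂.deleteEdges {s(x₂, y₂)}).Adj a b
      rw [deleteEdges_adj]
      refine ⟨N₂.adj_sub h, fun hm => ?_⟩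
      rw [Set.mem_singleton_iff, Sym2.eq_iff] at hm
      rcases hm with ⟨rfl, rfl⟩ | ⟨rfl, rfl⟩
      · exact hN₂ h
      · exact hN₂ h.symm
  edge_vert := fun _ => Set.mem_univ _
  symm := by
    constructor
    rintro (a | a) (b | b) h
    · exact N₁.adj_symm h
    · exact h
    · exact h
    · exact N₂.adj_symm h

lemma sepSub_pm {N₁ : G₁.Subgraph} {N₂ : G₂.Subgraph}
    (hN₁ : N₁.IsPerfectMatching) (hN₂ : N₂.IsPerfectMatching)
    (hN₁e : ¬N₁.Adj x₁ y₁) (hN₂e : ¬N₂.Adj x₂ y₂) :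
    (sepSub (x₁ := x₁) (y₁ := y₁) (x₂ := x₂) (y₂ := y₂) N₁ N₂ hN₁e hN₂e).IsPerfectMatching := by
  constructor
  · rintro (a | a) -
    · obtain ⟨b, hb, hu⟩ := hN₁.1 (hN₁.2 a)
      refine ⟨Sum.inl b, hb, ?_⟩
      rintro (w | w) hw
      · exact congrArg Sum.inl (hu w hw)
      · exact hw.elim
    · obtain ⟨b, hb, hu⟩ := hN₂.1 (hN₂.2 a)
      refine ⟨Sum.inr b, hb, ?_⟩
      rintro (w | w) hw
      · exact hw.elim
      · exact congrArg Sum.inr (hu w hw)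
  · exact fun v => Set.mem_univ v

end Cross

/-- splicing two matching-covered graphs (each with at least
two edges) along edges `e₁, e₂` yields a matching-covered graph. -/
theorem stmt17 {V₁ V₂ : Type*} [Fintype V₁] [Fintype V₂]
    {G₁ : SimpleGraph V₁} {G₂ : SimpleGraph V₂} {x₁ y₁ : V₁} {x₂ y₂ : V₂}
    (h₁ : MatchingCovered G₁) (h₂ : MatchingCovered G₂)
    (he₁ : G₁.Adj x₁ y₁) (he₂ : G₂.Adj x₂ y₂)
    (hE₁ : 2 ≤ G₁.edgeSet.ncard) (hE₂ : 2 ≤ G₂.edgeSet.ncard) :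
    MatchingCovered (splice G₁ G₂ x₁ y₁ x₂ y₂) := by
  classical
  obtain ⟨M₁, hM₁, hM₁e⟩ := h₁.2 s(x₁, y₁) he₁
  obtain ⟨M₂, hM₂, hM₂e⟩ := h₂.2 s(x₂, y₂) he₂
  rw [Subgraph.mem_edgeSet] at hM₁e hM₂e
  obtain ⟨N₁, hN₁, hN₁e⟩ := exists_pm_avoiding h₁ he₁ hE₁
  obtain ⟨N₂, hN₂, hN₂e⟩ := exists_pm_avoiding h₂ he₂ hE₂
  rw [Subgraph.mem_edgeSet] at hN₁e hN₂e
  have hc₁ := del_connected' h₁.1 (del_reachable h₁ he₁ hE₁)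
  have hc₂ := del_connected' h₂.1 (del_reachable h₂ he₂ hE₂)
  have rl : ∀ a b : V₁, (splice G₁ G₂ x₁ y₁ x₂ y₂).Reachable (Sum.inl a) (Sum.inl b) :=
    fun a b => Reachable.map ⟨Sum.inl, fun h => h⟩ (hc₁.preconnected a b)
  have rr : ∀ a b : V₂, (splice G₁ G₂ x₁ y₁ x₂ y₂).Reachable (Sum.inr a) (Sum.inr b) :=
    fun a b => Reachable.map ⟨Sum.inr, fun h => h⟩ (hc₂.preconnected a b)
  have hadj : (splice G₁ G₂ x₁ y₁ x₂ y₂).Adj (Sum.inl x₁) (Sum.inr x₂) := Or.inl ⟨rfl, rfl⟩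
  constructor
  · -- connectivity
    haveI : Nonempty (V₁ ⊕ V₂) := ⟨Sum.inl x₁⟩
    refine ⟨fun u v => ?_⟩
    rcases u with u | u <;> rcases v with v | v
    · exact rl u v
    · exact ((rl u x₁).trans hadj.reachable).trans (rr x₂ v)
    · exact ((rr u x₂).trans hadj.reachable.symm).trans (rl x₁ v)
    · exact rr u v
  · -- every edge is in a perfect matching
    intro e he
    induction e with
    | h a b =>
      rw [mem_edgeSet] at he
      rcases a with u | u <;> rcases b with v | v
      · -- an edge of `G₁ - e₁`
        have he' : (G₁.deleteEdges {s(x₁, y₁)}).Adj u v := he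
        rw [deleteEdges_adj] at he'
        have hne : s(u, v) ≠ s(x₁, y₁) := by simpa using he'.2
        obtain ⟨M, hM, hMe⟩ := h₁.2 s(u, v) he'.1
        rw [Subgraph.mem_edgeSet] at hMe
        by_cases hx : M.Adj x₁ y₁
        · exact ⟨crossSub M M₂, crossSub_pm hM hM₂ hx hM₂e he₁.ne he₂.ne,
            Subgraph.mem_edgeSet.2 (show _ ∧ _ from ⟨hMe, hne⟩)⟩
        · exact ⟨sepSub M N₂ hx hN₂e, sepSub_pm hM hN₂ hx hN₂e,
            Subgraph.mem_edgeSet.2 hMe⟩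
      · -- a cross edge
        have he' : (u = x₁ ∧ v = x₂) ∨ (u = y₁ ∧ v = y₂) := he
        exact ⟨crossSub M₁ M₂, crossSub_pm hM₁ hM₂ hM₁e hM₂e he₁.ne he₂.ne,
          Subgraph.mem_edgeSet.2 he'⟩
      · -- a cross edge (reversed)
        have he' : (v = x₁ ∧ u = x₂) ∨ (v = y₁ ∧ u = y₂) := he
        exact ⟨crossSub M₁ M₂, crossSub_pm hM₁ hM₂ hM₁e hM₂e he₁.ne he₂.ne,
          Subgraph.mem_edgeSet.2 he'⟩
      · -- an edge of `G₂ - e₂`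
        have he' : (G₂.deleteEdges {s(x₂, y₂)}).Adj u v := he
        rw [deleteEdges_adj] at he'
        have hne : s(u, v) ≠ s(x₂, y₂) := by simpa using he'.2
        obtain ⟨M, hM, hMe⟩ := h₂.2 s(u, v) he'.1
        rw [Subgraph.mem_edgeSet] at hMe
        by_cases hx : M.Adj x₂ y₂
        · exact ⟨crossSub M₁ M, crossSub_pm hM₁ hM hM₁e hx he₁.ne he₂.ne,
            Subgraph.mem_edgeSet.2 (show _ ∧ _ from ⟨hMe, hne⟩)⟩
        · exact ⟨sepSub N₁ M hN₁e hx, sepSub_pm hN₁ hM hN₁e hx,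
            Subgraph.mem_edgeSet.2 hMe⟩
end
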